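/- arXiv:1904.03880 — 4 statements merged into one kernel-verified Lean document; each statement's English description precedes it below -/
import Mathlib

section
/- For any graph G, an r-form α and an s-form β, the Leibniz rule d(α ∧ β) = dα ∧ β + (-1)^r α ∧ dβ holds. -/
open scoped Classical

namespace GraphHodge


variable {X : Type*}

/-- A tuple of vertices forms a clique: any two distinct indices give adjacent vertices. -/
def IsTupleClique (G : SimpleGraph X) {m : ℕ} (v : Fin m → X) : Prop :=
  ∀ i j : Fin m, i ≠ j → G.Adj (v i) (v j)

/-- Indicator function of cliques. -/
noncomputable def cliqueInd (G : SimpleGraph X) {m : ℕ} (v : Fin m → X) : ℝ :=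
  if IsTupleClique G v then 1 else 0

/-- A `k`-form on a graph: skew-symmetric and supported on `(k+1)`-cliques. -/
def IsGraphForm (G : SimpleGraph X) (k : ℕ) (α : (Fin (k + 1) → X) → ℝ) : Prop :=
  (∀ v, ¬ IsTupleClique G v → α v = 0) ∧
  ∀ (σ : Equiv.Perm (Fin (k + 1))) (v : Fin (k + 1) → X),
    α (v ∘ σ) = ((Equiv.Perm.sign σ : ℤ) : ℝ) * α v

/-- The exterior differential of a `k`-form on a graph. -/
noncomputable def gd (G : SimpleGraph X) {k : ℕ} (α : (Fin (k + 1) → X) → ℝ) :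
    (Fin (k + 2) → X) → ℝ :=
  fun v => cliqueInd G v * ∑ j : Fin (k + 2), (-1 : ℝ) ^ (j : ℕ) * α (v ∘ j.succAbove)

/-- Tensor product of an `r`-form and an `s`-form on a graph. -/
noncomputable def gtensor (G : SimpleGraph X) {r s : ℕ}
    (α : (Fin (r + 1) → X) → ℝ) (β : (Fin (s + 1) → X) → ℝ) :
    (Fin (r + s + 1) → X) → ℝ :=
  fun v => cliqueInd G v * α (fun i => v ⟨i.1, by have := i.2; omega⟩) *
    β (fun i => v ⟨r + i.1, by have := i.2; omega⟩)

/-- Skew-symmetrization operator on functions of vertex tuples. -/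
noncomputable def skewSym {m : ℕ} (f : (Fin m → X) → ℝ) : (Fin m → X) → ℝ :=
  fun v => ((m.factorial : ℝ))⁻¹ *
    ∑ σ : Equiv.Perm (Fin m), ((Equiv.Perm.sign σ : ℤ) : ℝ) * f (v ∘ σ)

/-- Wedge product of graph forms: skew-symmetrization of the tensor product. -/
noncomputable def gwedge (G : SimpleGraph X) {r s : ℕ}
    (α : (Fin (r + 1) → X) → ℝ) (β : (Fin (s + 1) → X) → ℝ) :
    (Fin (r + s + 1) → X) → ℝ :=
  skewSym (gtensor G α β)


open Equiv Equiv.Perm Finset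

private lemma clique_comp_of_inj {G : SimpleGraph X} {m m' : ℕ} {v : Fin m' → X}
    (h : IsTupleClique G v) {f : Fin m → Fin m'} (hf : Function.Injective f) :
    IsTupleClique G (fun i => v (f i)) :=
  fun i j hij => h (f i) (f j) (fun he => hij (hf he))

private lemma clique_of_comp_surj {G : SimpleGraph X} {m m' : ℕ} {v : Fin m' → X}
    {f : Fin m → Fin m'} (hf : Function.Surjective f)
    (h : IsTupleClique G (fun i => v (f i))) : IsTupleClique G v := by
  intro i j hij
  obtain ⟨a, ha⟩ := hf i
  obtain ⟨b, hb⟩ := hf j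
  subst ha hb
  exact h a b (fun he => hij (by rw [he]))

private lemma val_succAbove {n : ℕ} (j : Fin (n+1)) (i : Fin n) :
    ((j.succAbove i : Fin (n+1)) : ℕ) = if i.1 < j.1 then i.1 else i.1 + 1 := by
  rw [Fin.succAbove]
  split_ifs with h1 h2 h2 <;> simp_all [Fin.lt_def]

private def Fj {n : ℕ} (j : Fin (n+1)) (mp : Fin (n+1) × Perm (Fin n)) : Perm (Fin (n+1)) :=
  (Fin.cycleRange mp.1)⁻¹ * (Equiv.Perm.decomposeFin.symm (0, mp.2)) * Fin.cycleRange j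

private lemma Fj_apply_j {n : ℕ} (j : Fin (n+1)) (mp : Fin (n+1) × Perm (Fin n)) :
    Fj j mp j = mp.1 := by
  simp only [Fj, Perm.mul_apply]
  rw [Fin.cycleRange_self, Equiv.Perm.decomposeFin_symm_apply_zero,
    Equiv.Perm.inv_eq_iff_eq, Fin.cycleRange_self]

private lemma Fj_succAbove {n : ℕ} (j : Fin (n+1)) (mp : Fin (n+1) × Perm (Fin n)) (k : Fin n) :
    Fj j mp (j.succAbove k) = mp.1.succAbove (mp.2 k) := by
  simp only [Fj, Perm.mul_apply]
  rw [Fin.cycleRange_succAbove, Equiv.Perm.decomposeFin_symm_apply_succ,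
    Equiv.swap_self, Equiv.refl_apply, Equiv.Perm.inv_eq_iff_eq, Fin.cycleRange_succAbove]

private lemma Fj_sign {n : ℕ} (j : Fin (n+1)) (mp : Fin (n+1) × Perm (Fin n)) :
    Perm.sign (Fj j mp) = (-1)^(mp.1 : ℕ) * (-1)^(j : ℕ) * Perm.sign mp.2 := by
  simp only [Fj, map_mul, map_inv, Fin.sign_cycleRange, Equiv.Perm.decomposeFin.symm_sign,
    if_pos rfl, one_mul]
  rw [Int.units_inv_eq_self]
  simp only [if_true, one_mul]
  exact mul_right_comm _ _ _

private lemma Fj_bijective {n : ℕ} (j : Fin (n+1)) : Function.Bijective (Fj j) := by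
  constructor
  · rintro ⟨m, p⟩ ⟨m', p'⟩ h
    have hm : m = m' := by
      have := congrArg (fun σ : Perm (Fin (n+1)) => σ j) h
      simpa [Fj_apply_j] using this
    subst hm
    simp only [Fj, mul_left_cancel_iff, mul_right_cancel_iff] at h
    have := Equiv.injective (Equiv.Perm.decomposeFin.symm) h
    simp only [Prod.mk.injEq] at this
    simp [this.2]
  · intro σ
    set τ : Perm (Fin (n+1)) := Fin.cycleRange (σ j) * σ * (Fin.cycleRange j)⁻¹ with hτ
    have hτ0 : τ 0 = 0 := by
      have hj : (Fin.cycleRange j)⁻¹ 0 = j := by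
        rw [Equiv.Perm.inv_eq_iff_eq, Fin.cycleRange_self]
      simp [hτ, Perm.mul_apply, hj, Fin.cycleRange_self]
    refine ⟨(σ j, (Equiv.Perm.decomposeFin τ).2), ?_⟩
    have h1 : Equiv.Perm.decomposeFin.symm (Equiv.Perm.decomposeFin τ) = τ :=
      Equiv.symm_apply_apply _ _
    have hfst : (Equiv.Perm.decomposeFin τ).1 = 0 := by
      have h3 := congrArg (fun σ : Perm (Fin (n+1)) => σ 0) h1
      rw [← hτ0, ← h3]
      conv_lhs => rw [show Equiv.Perm.decomposeFin τ
        = ((Equiv.Perm.decomposeFin τ).1, (Equiv.Perm.decomposeFin τ).2) from rfl]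
      rw [Equiv.Perm.decomposeFin_symm_apply_zero]
    have h2 : Equiv.Perm.decomposeFin.symm (0, (Equiv.Perm.decomposeFin τ).2) = τ := by
      conv_lhs => rw [← hfst, Prod.mk.eta]
      exact h1
    simp only [Fj]
    rw [h2, hτ]
    group

private lemma key_reindex {n : ℕ} (g : (Fin n → Fin (n+1)) → ℝ) :
    ∑ σ : Perm (Fin (n+1)), ((Perm.sign σ : ℤ) : ℝ) *
        ∑ j : Fin (n+1), (-1:ℝ)^(j:ℕ) * g (⇑σ ∘ j.succAbove)
    = (n+1 : ℝ) * ∑ m : Fin (n+1), (-1:ℝ)^(m:ℕ) *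
        ∑ p : Perm (Fin n), ((Perm.sign p : ℤ) : ℝ) * g (m.succAbove ∘ ⇑p) := by
  have step1 : ∀ j : Fin (n+1),
      (∑ σ : Perm (Fin (n+1)), ((Perm.sign σ : ℤ) : ℝ) * ((-1:ℝ)^(j:ℕ) * g (⇑σ ∘ j.succAbove)))
      = ∑ m : Fin (n+1), (-1:ℝ)^(m:ℕ) *
          ∑ p : Perm (Fin n), ((Perm.sign p : ℤ) : ℝ) * g (m.succAbove ∘ ⇑p) := by
    intro j
    rw [show (∑ σ : Perm (Fin (n+1)), ((Perm.sign σ : ℤ) : ℝ) * ((-1:ℝ)^(j:ℕ) * g (⇑σ ∘ j.succAbove)))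
        = ∑ mp : Fin (n+1) × Perm (Fin n),
            (-1:ℝ)^(mp.1:ℕ) * (((Perm.sign mp.2 : ℤ) : ℝ) * g (mp.1.succAbove ∘ ⇑mp.2)) from
      (Fintype.sum_bijective (Fj j) (Fj_bijective j) _ _ ?_).symm]
    · rw [Fintype.sum_prod_type]
      exact Finset.sum_congr rfl fun m _ => by simp only [Finset.mul_sum]
    · intro mp
      have hc : ⇑(Fj j mp) ∘ j.succAbove = mp.1.succAbove ∘ ⇑mp.2 :=
        funext fun k => Fj_succAbove j mp k
      have hs' : ((Perm.sign (Fj j mp) : ℤ) : ℝ)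
          = (-1:ℝ)^(mp.1:ℕ) * (-1:ℝ)^(j:ℕ) * ((Perm.sign mp.2 : ℤ) : ℝ) := by
        rw [Fj_sign]; push_cast [Units.val_mul]; ring
      rw [hc, hs']
      have h11 : (-1:ℝ)^(j:ℕ) * (-1:ℝ)^(j:ℕ) = 1 := by
        rw [← pow_add]; exact Even.neg_one_pow ⟨_, rfl⟩
      linear_combination (-((-1:ℝ)^(mp.1:ℕ) * ((Perm.sign mp.2 : ℤ) : ℝ) *
        g (mp.1.succAbove ∘ ⇑mp.2))) * h11
  calc ∑ σ : Perm (Fin (n+1)), ((Perm.sign σ : ℤ) : ℝ) *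
        ∑ j : Fin (n+1), (-1:ℝ)^(j:ℕ) * g (⇑σ ∘ j.succAbove)
      = ∑ j : Fin (n+1), ∑ σ : Perm (Fin (n+1)),
          ((Perm.sign σ : ℤ) : ℝ) * ((-1:ℝ)^(j:ℕ) * g (⇑σ ∘ j.succAbove)) := by
        rw [Finset.sum_comm]
        exact Finset.sum_congr rfl fun σ _ => Finset.mul_sum _ _ _
    _ = ∑ _j : Fin (n+1), ∑ m : Fin (n+1), (-1:ℝ)^(m:ℕ) *
          ∑ p : Perm (Fin n), ((Perm.sign p : ℤ) : ℝ) * g (m.succAbove ∘ ⇑p) :=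
        Finset.sum_congr rfl fun j _ => step1 j
    _ = (n+1 : ℝ) * ∑ m : Fin (n+1), (-1:ℝ)^(m:ℕ) *
          ∑ p : Perm (Fin n), ((Perm.sign p : ℤ) : ℝ) * g (m.succAbove ∘ ⇑p) := by
        rw [Finset.sum_const, Finset.card_univ, Fintype.card_fin, nsmul_eq_mul]
        push_cast
        ring

section TensorLeibniz

variable {r s : ℕ}

private def aLf (r s : ℕ) (w : Fin (r+s+2) → X) (j : ℕ) : Fin (r+1) → X :=
  fun i => w ⟨if i.1 < j then i.1 else i.1+1, by have := i.2; split <;> omega⟩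

private def bLf (r s : ℕ) (w : Fin (r+s+2) → X) (j : ℕ) : Fin (s+1) → X :=
  fun i => w ⟨if r+i.1 < j then r+i.1 else r+i.1+1, by have := i.2; split <;> omega⟩

private def b1f (r s : ℕ) (w : Fin (r+s+2) → X) : Fin (s+1) → X :=
  fun i => w ⟨r+1+i.1, by have := i.2; omega⟩

private def a2f (r s : ℕ) (w : Fin (r+s+2) → X) : Fin (r+1) → X :=
  fun i => w ⟨i.1, by have := i.2; omega⟩

private def b2f (r s : ℕ) (w : Fin (r+s+2) → X) (j : ℕ) : Fin (s+1) → X :=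
  fun i => w ⟨if i.1 < j then r+i.1 else r+i.1+1, by have := i.2; split <;> omega⟩

private lemma hw_eq {m : ℕ} (w : Fin m → X) {a b : Fin m} (h : a.1 = b.1) : w a = w b :=
  congrArg w (Fin.ext h)

private lemma E1 (w : Fin (r+s+2) → X) {j : ℕ} (hj : j < r+1) :
    bLf r s w j = b1f r s w := by
  funext i
  exact hw_eq w (by simp only [bLf, b1f]; rw [if_neg (by omega)]; omega)

private lemma E2a (w : Fin (r+s+2) → X) (j : ℕ) :
    aLf r s w (r+1+j) = a2f r s w := by
  funext i
  refine hw_eq w ?_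
  simp only [aLf, a2f]
  rw [if_pos (by have := i.2; omega)]

private lemma E2b (w : Fin (r+s+2) → X) (j : ℕ) :
    bLf r s w (r+1+j) = b2f r s w (j+1) := by
  funext i
  refine hw_eq w ?_
  simp only [bLf, b2f]
  split_ifs <;> omega

private lemma E3a (w : Fin (r+s+2) → X) : aLf r s w (r+1) = a2f r s w := by
  have := E2a (r := r) (s := s) w 0
  simpa using this

private lemma E3b (w : Fin (r+s+2) → X) : b2f r s w 0 = b1f r s w := by
  funext i
  refine hw_eq w ?_
  simp only [b2f, b1f]
  rw [if_neg (by omega)]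
  omega

private lemma tensor_leibniz (r s : ℕ) (α : (Fin (r+1) → X) → ℝ) (β : (Fin (s+1) → X) → ℝ)
    (w : Fin (r+s+2) → X) :
    ∑ j : Fin (r+s+2), (-1:ℝ)^(j:ℕ) *
        (α (fun i : Fin (r+1) => w (j.succAbove ⟨i.1, by have := i.2; omega⟩)) *
         β (fun i : Fin (s+1) => w (j.succAbove ⟨r+i.1, by have := i.2; omega⟩)))
    = (∑ j : Fin (r+2), (-1:ℝ)^(j:ℕ) *
          (α (fun i : Fin (r+1) => w ⟨(j.succAbove i).1, by have := (j.succAbove i).2; omega⟩) *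
           β (b1f r s w)))
      + (-1:ℝ)^r * ∑ j : Fin (s+2), (-1:ℝ)^(j:ℕ) *
          (α (a2f r s w) *
           β (fun i : Fin (s+1) => w ⟨r + (j.succAbove i).1,
               by have := (j.succAbove i).2; omega⟩)) := by
  have hL : ∑ j : Fin (r+s+2), (-1:ℝ)^(j:ℕ) *
        (α (fun i : Fin (r+1) => w (j.succAbove ⟨i.1, by have := i.2; omega⟩)) *
         β (fun i : Fin (s+1) => w (j.succAbove ⟨r+i.1, by have := i.2; omega⟩)))
      = ∑ j ∈ range (r+s+2), (-1:ℝ)^j * (α (aLf r s w j) * β (bLf r s w j)) := by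
    rw [← Fin.sum_univ_eq_sum_range (fun j => (-1:ℝ)^j * (α (aLf r s w j) * β (bLf r s w j)))]
    refine Finset.sum_congr rfl fun j _ => ?_
    congr 1
    congr 1
    · exact congrArg α (funext fun i => hw_eq w (by rw [val_succAbove]))
    · exact congrArg β (funext fun i => hw_eq w (by rw [val_succAbove]))
  have hR1 : ∑ j : Fin (r+2), (-1:ℝ)^(j:ℕ) *
        (α (fun i : Fin (r+1) => w ⟨(j.succAbove i).1, by have := (j.succAbove i).2; omega⟩) *
         β (b1f r s w))
      = ∑ j ∈ range (r+2), (-1:ℝ)^j * (α (aLf r s w j) * β (b1f r s w)) := by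
    rw [← Fin.sum_univ_eq_sum_range (fun j => (-1:ℝ)^j * (α (aLf r s w j) * β (b1f r s w)))]
    refine Finset.sum_congr rfl fun j _ => ?_
    congr 2
    exact congrArg α (funext fun i => hw_eq w (by rw [val_succAbove]))
  have hR2 : ∑ j : Fin (s+2), (-1:ℝ)^(j:ℕ) *
        (α (a2f r s w) *
         β (fun i : Fin (s+1) => w ⟨r + (j.succAbove i).1,
             by have := (j.succAbove i).2; omega⟩))
      = ∑ j ∈ range (s+2), (-1:ℝ)^j * (α (a2f r s w) * β (b2f r s w j)) := by
    rw [← Fin.sum_univ_eq_sum_range (fun j => (-1:ℝ)^j * (α (a2f r s w) * β (b2f r s w j)))]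
    refine Finset.sum_congr rfl fun j _ => ?_
    congr 2
    exact congrArg β (funext fun i => hw_eq w (by
      show r + ((j.succAbove i : Fin (s+2)) : ℕ)
          = if (i:ℕ) < (j:ℕ) then r+(i:ℕ) else r+(i:ℕ)+1
      rw [val_succAbove]
      split_ifs <;> omega))
  rw [hL, hR1, hR2]
  rw [show r+s+2 = (r+1)+(s+1) by omega, Finset.sum_range_add]
  have e1 : ∑ j ∈ range (r+1), (-1:ℝ)^j * (α (aLf r s w j) * β (bLf r s w j))
      = ∑ j ∈ range (r+1), (-1:ℝ)^j * (α (aLf r s w j) * β (b1f r s w)) :=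
    Finset.sum_congr rfl fun j hj => by rw [E1 w (Finset.mem_range.mp hj)]
  have e2 : ∑ j ∈ range (s+1), (-1:ℝ)^(r+1+j) * (α (aLf r s w (r+1+j)) * β (bLf r s w (r+1+j)))
      = (-1:ℝ)^r * ∑ j ∈ range (s+1), (-1:ℝ)^(j+1) * (α (a2f r s w) * β (b2f r s w (j+1))) := by
    rw [Finset.mul_sum]
    refine Finset.sum_congr rfl fun j _ => ?_
    rw [E2a w j, E2b w j, show r+1+j = r+(j+1) by omega, pow_add]
    ring
  have f1 : ∑ j ∈ range (r+2), (-1:ℝ)^j * (α (aLf r s w j) * β (b1f r s w))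
      = (∑ j ∈ range (r+1), (-1:ℝ)^j * (α (aLf r s w j) * β (b1f r s w)))
        + (-1:ℝ)^(r+1) * (α (aLf r s w (r+1)) * β (b1f r s w)) :=
    Finset.sum_range_succ _ _
  have f2 : ∑ j ∈ range (s+2), (-1:ℝ)^j * (α (a2f r s w) * β (b2f r s w j))
      = (∑ j ∈ range (s+1), (-1:ℝ)^(j+1) * (α (a2f r s w) * β (b2f r s w (j+1))))
        + (-1:ℝ)^(0:ℕ) * (α (a2f r s w) * β (b2f r s w 0)) :=
    Finset.sum_range_succ' _ _
  rw [e1, e2, f1, f2, E3a w, ← E3b w]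
  ring
end TensorLeibniz


private noncomputable def gfun (r s : ℕ) (α : (Fin (r+1) → X) → ℝ) (β : (Fin (s+1) → X) → ℝ)
    (v : Fin (r+s+2) → X) (ι : Fin (r+s+1) → Fin (r+s+2)) : ℝ :=
  α (fun i : Fin (r+1) => v (ι ⟨i.1, by have := i.2; omega⟩)) *
  β (fun i : Fin (s+1) => v (ι ⟨r+i.1, by have := i.2; omega⟩))

private noncomputable def P1 (r s : ℕ) (α : (Fin (r+1) → X) → ℝ) (β : (Fin (s+1) → X) → ℝ)
    (v : Fin (r+s+2) → X) (σ : Perm (Fin (r+s+2))) : ℝ :=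
  ∑ j : Fin (r+2), (-1:ℝ)^(j:ℕ) *
    (α (fun i : Fin (r+1) => v (σ ⟨(j.succAbove i).1, by have := (j.succAbove i).2; omega⟩)) *
     β (fun i : Fin (s+1) => v (σ ⟨r+1+i.1, by have := i.2; omega⟩)))

private noncomputable def P2 (r s : ℕ) (α : (Fin (r+1) → X) → ℝ) (β : (Fin (s+1) → X) → ℝ)
    (v : Fin (r+s+2) → X) (σ : Perm (Fin (r+s+2))) : ℝ :=
  ∑ j : Fin (s+2), (-1:ℝ)^(j:ℕ) *
    (α (fun i : Fin (r+1) => v (σ ⟨i.1, by have := i.2; omega⟩)) *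
     β (fun i : Fin (s+1) => v (σ ⟨r+(j.succAbove i).1, by have := (j.succAbove i).2; omega⟩)))

/-- the Leibniz rule `d(α ∧ β) = dα ∧ β + (-1)^r α ∧ dβ` for graph forms. -/
theorem gd_gwedge {X : Type*} (G : SimpleGraph X) (r s : ℕ)
    (α : (Fin (r + 1) → X) → ℝ) (hα : IsGraphForm G r α)
    (β : (Fin (s + 1) → X) → ℝ) (hβ : IsGraphForm G s β)
    (v : Fin (r + s + 2) → X) :
    gd G (gwedge G α β) v =
      gwedge G (gd G α) β
          (fun i => v (Fin.cast (by omega : r + 1 + s + 1 = r + s + 2) i)) +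
        (-1 : ℝ) ^ r * gwedge G α (gd G β) v := by
  by_cases hv : IsTupleClique G v
  · have hone : ∀ {m : ℕ} (f : Fin m → Fin (r+s+2)), Function.Injective f →
        cliqueInd G (fun i => v (f i)) = 1 := by
      intro m f hf
      rw [cliqueInd, if_pos (clique_comp_of_inj hv hf)]
    have hA : gd G (gwedge G α β) v
        = ((r+s+1).factorial:ℝ)⁻¹ * ∑ j : Fin (r+s+2), (-1:ℝ)^(j:ℕ) *
            ∑ p : Perm (Fin (r+s+1)), ((Perm.sign p : ℤ):ℝ) *
              gfun r s α β v (j.succAbove ∘ ⇑p) := by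
      rw [gd]
      have hc1 : cliqueInd G v = 1 := hone (fun i => i) (fun a b h => h)
      rw [hc1, one_mul, Finset.mul_sum]
      refine Finset.sum_congr rfl fun j _ => ?_
      simp only [gwedge, skewSym, gtensor, Function.comp]
      rw [show (∑ x : Perm (Fin (r+s+1)), ((Perm.sign x : ℤ):ℝ) *
            ((cliqueInd G ((v ∘ j.succAbove) ∘ ⇑x) *
                α fun i => v (j.succAbove (x ⟨i.1, by have := i.2; omega⟩))) *
              β fun i => v (j.succAbove (x ⟨r + i.1, by have := i.2; omega⟩))))
          = ∑ p : Perm (Fin (r+s+1)), ((Perm.sign p : ℤ):ℝ) * gfun r s α β v (j.succAbove ∘ ⇑p) from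
        Finset.sum_congr rfl fun p _ => ?_]
      · ring
      · have hc : cliqueInd G ((v ∘ j.succAbove) ∘ ⇑p) = 1 :=
          hone (fun i => j.succAbove (p i)) (Fin.succAbove_right_injective.comp p.injective)
        rw [hc, one_mul]
        rfl
    have key : (∑ σ : Perm (Fin (r+s+2)), ((Perm.sign σ : ℤ):ℝ) *
          ∑ j : Fin (r+s+2), (-1:ℝ)^(j:ℕ) * gfun r s α β v (⇑σ ∘ j.succAbove))
        = (((r+s+1 : ℕ) : ℝ) + 1) * ∑ j : Fin (r+s+2), (-1:ℝ)^(j:ℕ) *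
            ∑ p : Perm (Fin (r+s+1)), ((Perm.sign p : ℤ):ℝ) *
              gfun r s α β v (j.succAbove ∘ ⇑p) :=
      key_reindex (gfun r s α β v)
    have hB : gd G (gwedge G α β) v
        = ((r+s+2).factorial:ℝ)⁻¹ * ∑ σ : Perm (Fin (r+s+2)), ((Perm.sign σ : ℤ):ℝ) *
            ∑ j : Fin (r+s+2), (-1:ℝ)^(j:ℕ) * gfun r s α β v (⇑σ ∘ j.succAbove) := by
      rw [hA, key]
      have hfac : ((r+s+2).factorial : ℝ)
          = (((r+s+1 : ℕ) : ℝ) + 1) * ((r+s+1).factorial:ℝ) := by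
        rw [show r+s+2 = (r+s+1)+1 from rfl, Nat.factorial_succ]
        push_cast
        ring
      rw [hfac]
      have h1 : ((r+s+1).factorial:ℝ) ≠ 0 := Nat.cast_ne_zero.mpr (Nat.factorial_ne_zero _)
      have h2 : (((r+s+1 : ℕ) : ℝ) + 1) ≠ 0 := by positivity
      field_simp
    have hC : gd G (gwedge G α β) v
        = ((r+s+2).factorial:ℝ)⁻¹ * ∑ σ : Perm (Fin (r+s+2)), ((Perm.sign σ : ℤ):ℝ) *
            (P1 r s α β v σ + (-1:ℝ)^r * P2 r s α β v σ) := by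
      rw [hB]
      congr 1
      refine Finset.sum_congr rfl fun σ _ => ?_
      congr 1
      exact tensor_leibniz r s α β (fun t => v (σ t))
    have hD : gd G (gwedge G α β) v
        = ((r+s+2).factorial:ℝ)⁻¹ * (∑ σ : Perm (Fin (r+s+2)), ((Perm.sign σ : ℤ):ℝ) * P1 r s α β v σ)
          + (-1:ℝ)^r * (((r+s+2).factorial:ℝ)⁻¹ *
              ∑ σ : Perm (Fin (r+s+2)), ((Perm.sign σ : ℤ):ℝ) * P2 r s α β v σ) := by
      rw [hC]
      rw [show (∑ σ : Perm (Fin (r+s+2)), ((Perm.sign σ : ℤ):ℝ) *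
            (P1 r s α β v σ + (-1:ℝ)^r * P2 r s α β v σ))
          = (∑ σ : Perm (Fin (r+s+2)), ((Perm.sign σ : ℤ):ℝ) * P1 r s α β v σ)
            + (-1:ℝ)^r * ∑ σ : Perm (Fin (r+s+2)), ((Perm.sign σ : ℤ):ℝ) * P2 r s α β v σ from by
        rw [Finset.mul_sum, ← Finset.sum_add_distrib]
        exact Finset.sum_congr rfl fun σ _ => by ring]
      ring
    have hE1 : gwedge G (gd G α) β
        (fun i => v (Fin.cast (by omega : r + 1 + s + 1 = r + s + 2) i))
        = ((r+s+2).factorial:ℝ)⁻¹ *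
            ∑ σ : Perm (Fin (r+s+2)), ((Perm.sign σ : ℤ):ℝ) * P1 r s α β v σ := by
      simp only [gwedge, skewSym, gtensor, gd, Function.comp, P1]
      congr 1
      · rw [show r+1+s+1 = r+s+2 from by omega]
      refine Fintype.sum_equiv ((finCongr (by omega : r+1+s+1 = r+s+2)).permCongr) _ _ fun σ' => ?_
      rw [Equiv.Perm.sign_permCongr]
      congr 1
      have hc1 : cliqueInd G
          ((fun i => v (Fin.cast (by omega : r+1+s+1 = r+s+2) i)) ∘ ⇑σ') = 1 :=
        hone (fun i => Fin.cast (by omega : r+1+s+1 = r+s+2) (σ' i))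
          (fun a b h => σ'.injective (Fin.cast_injective _ h))
      have hc2 : (cliqueInd G fun i : Fin (r+2) =>
          v (Fin.cast (by omega : r+1+s+1 = r+s+2) (σ' ⟨i.1, by have := i.2; omega⟩))) = 1 :=
        hone (fun i : Fin (r+2) => Fin.cast (by omega : r+1+s+1 = r+s+2)
            (σ' ⟨i.1, by have := i.2; omega⟩))
          (fun a b h => by
            have h2 := σ'.injective (Fin.cast_injective _ h)
            simpa [Fin.ext_iff] using h2)
      rw [hc1, hc2, one_mul, one_mul, Finset.sum_mul]
      refine Finset.sum_congr rfl fun j _ => ?_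
      rw [mul_assoc]
      rfl
    have hE2 : gwedge G α (gd G β) v
        = ((r+s+2).factorial:ℝ)⁻¹ *
            ∑ σ : Perm (Fin (r+s+2)), ((Perm.sign σ : ℤ):ℝ) * P2 r s α β v σ := by
      simp only [gwedge, skewSym, gtensor, gd, Function.comp, P2]
      congr 1
      refine Fintype.sum_equiv (Equiv.refl _) _ _ fun σ => ?_
      simp only [Equiv.refl_apply]
      congr 1
      have hc1 : cliqueInd G (v ∘ ⇑σ) = 1 := hone (fun i => σ i) σ.injective
      have hc2 : (cliqueInd G fun i : Fin (s+2) =>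
          v (σ ⟨r + i.1, by have := i.2; omega⟩)) = 1 :=
        hone (fun i : Fin (s+2) => σ ⟨r + i.1, by have := i.2; omega⟩)
          (fun a b h => by
            have h2 := σ.injective h
            simpa [Fin.ext_iff] using h2)
      rw [hc1, hc2, one_mul, one_mul, Finset.mul_sum]
      refine Finset.sum_congr rfl fun j _ => ?_
      exact mul_left_comm _ _ _
    rw [hD, hE1, hE2]
  · -- non-clique case: everything vanishes
    have hz : ∀ {m : ℕ} (f : Fin m → Fin (r+s+2)), Function.Surjective f →
        cliqueInd G (fun i => v (f i)) = 0 := by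
      intro m f hf
      rw [cliqueInd, if_neg (fun hc => hv (clique_of_comp_surj hf hc))]
    have h0 : gd G (gwedge G α β) v = 0 := by
      rw [gd, cliqueInd, if_neg hv, zero_mul]
    have h1 : gwedge G (gd G α) β
        (fun i => v (Fin.cast (by omega : r + 1 + s + 1 = r + s + 2) i)) = 0 := by
      simp only [gwedge, skewSym, gtensor, Function.comp]
      rw [Finset.sum_eq_zero, mul_zero]
      intro σ _
      have hc0 : cliqueInd G ((fun i => v (Fin.cast (by omega : r + 1 + s + 1 = r + s + 2) i)) ∘ ⇑σ) = 0 :=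
        hz (fun i => Fin.cast (by omega : r + 1 + s + 1 = r + s + 2) (σ i))
          (fun y => ⟨σ.symm (Fin.cast (by omega) y), by simp [Fin.ext_iff]⟩)
      rw [hc0]
      ring
    have h2 : gwedge G α (gd G β) v = 0 := by
      simp only [gwedge, skewSym, gtensor, Function.comp]
      rw [Finset.sum_eq_zero, mul_zero]
      intro σ _
      have hc0 : cliqueInd G (v ∘ ⇑σ) = 0 :=
        hz (fun i => σ i) (fun y => ⟨σ.symm y, by simp⟩)
      rw [hc0]
      ring
    rw [h0, h1, h2]
    ring


end GraphHodge
end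

section
/- Let (G,w) be a finite weighted graph with the inner product ⟨α,β⟩ = (1/(k+1)!) Σ_{v_0,...,v_k} α(v_0,...,v_k) β(v_0,...,v_k) w(v_0,...,v_k) on k-forms. Then the adjoint δ of d with respect to these inner products is given by (δα)(v_0,...,v_k) = (1/w(v_0,...,v_k)) Σ_{v∈V(G)} α(v,v_0,...,v_k) w(v,v_0,...,v_k) for any (k+1)-form α, on (k+1)-cliques {v_0,...,v_k}. -/
open scoped Classical

namespace GraphHodge


variable {X : Type*}

/-- A positive weight on all cliques of a graph, symmetric in its arguments and
vanishing off cliques. -/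
structure GraphWeight (G : SimpleGraph X) where
  w : ∀ {m : ℕ}, (Fin (m + 1) → X) → ℝ
  symm : ∀ {m : ℕ} (σ : Equiv.Perm (Fin (m + 1))) (v : Fin (m + 1) → X), w (v ∘ σ) = w v
  pos : ∀ {m : ℕ} (v : Fin (m + 1) → X), IsTupleClique G v → 0 < w v
  eq_zero : ∀ {m : ℕ} (v : Fin (m + 1) → X), ¬ IsTupleClique G v → w v = 0

variable {G : SimpleGraph X}

/-- The weighted inner product on `k`-forms of a finite weighted graph. -/
noncomputable def formInner [Fintype X] (w : GraphWeight G) {k : ℕ}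
    (α β : (Fin (k + 1) → X) → ℝ) : ℝ :=
  (((k + 1).factorial : ℝ))⁻¹ * ∑ v : Fin (k + 1) → X, α v * β v * w.w v

/-- The codifferential (formal adjoint of `gd`) on a finite weighted graph. -/
noncomputable def gdelta [Fintype X] (w : GraphWeight G) {k : ℕ}
    (α : (Fin (k + 2) → X) → ℝ) : (Fin (k + 1) → X) → ℝ :=
  fun v => (w.w v)⁻¹ * ∑ u : X, α (Fin.cons u v) * w.w (Fin.cons u v)

lemma clique_of_cons {m : ℕ} {u : X} {v : Fin (m + 1) → X}
    (h : IsTupleClique G (Fin.cons u v)) : IsTupleClique G v := by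
  intro i j hij
  have := h i.succ j.succ (fun he => hij (Fin.succ_injective _ he))
  simpa using this

lemma insertNth_eq_cons_comp {n : ℕ} (j : Fin (n + 1)) (u : X) (v : Fin n → X) :
    Fin.insertNth j u v = (Fin.cons u v) ∘ ⇑(Fin.cycleRange j) := by
  funext i
  by_cases h : i = j
  · subst h
    simp [Fin.cycleRange_self]
  · obtain ⟨m, rfl⟩ := Fin.exists_succAbove_eq h
    simp [Fin.cycleRange_succAbove]

/-- on a finite weighted graph, the operator `δ` given by
`(δα)(v₀,…,v_k) = w(v₀,…,v_k)⁻¹ ∑_v α(v,v₀,…,v_k) w(v,v₀,…,v_k)` is the adjoint of the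
exterior differential `d` with respect to the weighted inner products on forms. -/
theorem gdelta_adjoint {X : Type*} [Fintype X] (G : SimpleGraph X) (w : GraphWeight G)
    (k : ℕ) (α : (Fin (k + 2) → X) → ℝ) (hα : IsGraphForm G (k + 1) α)
    (β : (Fin (k + 1) → X) → ℝ) (hβ : IsGraphForm G k β) :
    formInner w (gdelta w α) β = formInner w α (gd G β) := by
  classical
  set T : ℝ := ∑ v : Fin (k + 1) → X, ∑ u : X,
      α (Fin.cons u v) * w.w (Fin.cons u v) * β v with hT
  have hL : formInner w (gdelta w α) β = (((k + 1).factorial : ℝ))⁻¹ * T := by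
    unfold formInner gdelta
    congr 1
    apply Finset.sum_congr rfl
    intro v _
    by_cases h : IsTupleClique G v
    · have hw : w.w v ≠ 0 := (w.pos v h).ne'
      rw [← Finset.sum_mul]
      field_simp
    · have hw0 : w.w v = 0 := w.eq_zero v h
      have hcons : ∀ u : X, w.w (Fin.cons u v) = 0 := fun u =>
        w.eq_zero _ (fun hc => h (clique_of_cons hc))
      simp [hw0, hcons]
  have hR : formInner w α (gd G β) = (((k + 2).factorial : ℝ))⁻¹ * ((k + 2) * T) := by
    unfold formInner gd
    congr 1
    have step1 : ∀ x : Fin (k + 2) → X,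
        α x * (cliqueInd G x * ∑ j : Fin (k + 2),
          (-1 : ℝ) ^ (j : ℕ) * β (x ∘ j.succAbove)) * w.w x
        = ∑ j : Fin (k + 2), (-1 : ℝ) ^ (j : ℕ) * (α x * β (x ∘ j.succAbove) * w.w x) := by
      intro x
      have hcw : cliqueInd G x * w.w x = w.w x := by
        by_cases h : IsTupleClique G x
        · simp [cliqueInd, h]
        · simp [cliqueInd, h, w.eq_zero x h]
      calc α x * (cliqueInd G x * ∑ j : Fin (k + 2),
              (-1 : ℝ) ^ (j : ℕ) * β (x ∘ j.succAbove)) * w.w x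
          = (∑ j : Fin (k + 2), (-1 : ℝ) ^ (j : ℕ) * β (x ∘ j.succAbove))
              * (α x * (cliqueInd G x * w.w x)) := by ring
        _ = (∑ j : Fin (k + 2), (-1 : ℝ) ^ (j : ℕ) * β (x ∘ j.succAbove)) * (α x * w.w x) := by
              rw [hcw]
        _ = _ := by rw [Finset.sum_mul]; apply Finset.sum_congr rfl; intro j _; ring
    rw [Finset.sum_congr rfl (fun x _ => step1 x), Finset.sum_comm]
    have step2 : ∀ j : Fin (k + 2),
        (∑ x : Fin (k + 2) → X, (-1 : ℝ) ^ (j : ℕ) * (α x * β (x ∘ j.succAbove) * w.w x)) = T := by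
      intro j
      have := Equiv.sum_comp (Fin.insertNthEquiv (fun _ : Fin (k + 2) => X) j)
        (fun x => (-1 : ℝ) ^ (j : ℕ) * (α x * β (x ∘ j.succAbove) * w.w x))
      rw [← this, Fintype.sum_prod_type, hT, Finset.sum_comm]
      apply Finset.sum_congr rfl
      intro v _
      apply Finset.sum_congr rfl
      intro u _
      have he : (Fin.insertNthEquiv (fun _ : Fin (k + 2) => X) j) (u, v)
          = Fin.insertNth j u v := rfl
      rw [he, Fin.insertNth_comp_succAbove, insertNth_eq_cons_comp,
        hα.2 (Fin.cycleRange j) (Fin.cons u v), w.symm (Fin.cycleRange j) (Fin.cons u v)]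
      have hs : ((Equiv.Perm.sign (Fin.cycleRange j) : ℤ) : ℝ) = (-1 : ℝ) ^ (j : ℕ) := by
        rw [Fin.sign_cycleRange]; push_cast; ring
      rw [hs]
      have : (-1 : ℝ) ^ (j : ℕ) * (-1 : ℝ) ^ (j : ℕ) = 1 := by
        rw [← pow_add, ← two_mul, pow_mul]; norm_num
      calc (-1 : ℝ) ^ (j : ℕ) * ((-1 : ℝ) ^ (j : ℕ) * α (Fin.cons u v) * β v
              * w.w (Fin.cons u v))
          = ((-1 : ℝ) ^ (j : ℕ) * (-1 : ℝ) ^ (j : ℕ))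
              * (α (Fin.cons u v) * w.w (Fin.cons u v) * β v) := by ring
        _ = α (Fin.cons u v) * w.w (Fin.cons u v) * β v := by rw [this]; ring
    rw [Finset.sum_congr rfl (fun j _ => step2 j), Finset.sum_const, Finset.card_univ,
      Fintype.card_fin, nsmul_eq_mul]
    push_cast
    ring
  rw [hL, hR]
  have hfac : ((k + 2).factorial : ℝ) = (k + 2) * ((k + 1).factorial : ℝ) := by
    rw [show k + 2 = (k + 1) + 1 by ring, Nat.factorial_succ]
    push_cast
    ring
  have h1 : ((k + 1).factorial : ℝ) ≠ 0 := Nat.cast_ne_zero.mpr (Nat.factorial_ne_zero _)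
  have h2 : ((k : ℝ) + 2) ≠ 0 := by positivity
  rw [hfac]
  field_simp

end GraphHodge
end

section
/- Let (G,w) be a finite weighted graph. Then the space of r-forms admits the orthogonal Hodge decomposition A^r(G) = d(A^{r-1}(G)) ⊕ ℋ^r(G) ⊕ δ(A^{r+1}(G)), where ℋ^r(G) is the kernel of the Hodge Laplacian Δ = dδ + δd. Consequently the de Rham cohomology group H^r_{dR}(G) = ker(d|_{A^r})/d(A^{r-1}(G)) is isomorphic to ℋ^r(G). -/
open scoped Classical

namespace GraphHodge


variable {X : Type*}

variable {G : SimpleGraph X}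

/-- The space of exact `r`-forms: `d(A^{r-1}(G))`, with `A^{-1}(G) = 0`. -/
def exactPart {X : Type*} (G : SimpleGraph X) : (r : ℕ) → Set ((Fin (r + 1) → X) → ℝ)
  | 0 => {0}
  | r + 1 => {ξ | ∃ β, IsGraphForm G r β ∧ ξ = gd G β}

/-- The Hodge Laplacian `Δ = dδ + δd` (with `δ = 0` on `0`-forms). -/
noncomputable def hodgeLap {X : Type*} [Fintype X] (G : SimpleGraph X) (w : GraphWeight G) :
    (r : ℕ) → ((Fin (r + 1) → X) → ℝ) → ((Fin (r + 1) → X) → ℝ)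
  | 0, α => gdelta w (gd G α)
  | r + 1, α => gdelta w (gd G α) + gd G (gdelta w α)

section AuxLemmas

/-- Real-valued sign of a permutation. -/
noncomputable def sgn {n : ℕ} (σ : Equiv.Perm (Fin n)) : ℝ :=
  ((Equiv.Perm.sign σ : ℤ) : ℝ)

lemma sgn_mul {n : ℕ} (σ τ : Equiv.Perm (Fin n)) : sgn (σ * τ) = sgn σ * sgn τ := by
  simp [sgn]

lemma sgn_inv {n : ℕ} (σ : Equiv.Perm (Fin n)) : sgn σ⁻¹ = sgn σ := by
  rcases Int.units_eq_one_or (Equiv.Perm.sign σ) with h | h <;> simp [sgn, h]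

lemma sgn_mul_self {n : ℕ} (σ : Equiv.Perm (Fin n)) : sgn σ * sgn σ = 1 := by
  rcases Int.units_eq_one_or (Equiv.Perm.sign σ) with h | h <;> simp [sgn, h]

lemma isTupleClique_comp {m m' : ℕ} {v : Fin m → X} (h : IsTupleClique G v)
    {f : Fin m' → Fin m} (hf : Function.Injective f) : IsTupleClique G (v ∘ f) :=
  fun i j hij => h (f i) (f j) fun e => hij (hf e)

lemma isTupleClique_comp_perm {m : ℕ} (σ : Equiv.Perm (Fin m)) (v : Fin m → X) :
    IsTupleClique G (v ∘ σ) ↔ IsTupleClique G v := by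
  constructor
  · intro h
    have h2 := isTupleClique_comp (G := G) h σ.symm.injective
    have h3 : (v ∘ ⇑σ) ∘ ⇑σ.symm = v := by funext i; simp
    rwa [h3] at h2
  · intro h; exact isTupleClique_comp h σ.injective

lemma cliqueInd_comp_perm {m : ℕ} (σ : Equiv.Perm (Fin m)) (v : Fin m → X) :
    cliqueInd G (v ∘ σ) = cliqueInd G v := by
  unfold cliqueInd
  rw [if_congr (isTupleClique_comp_perm σ v) rfl rfl]

lemma cliqueInd_mul_w {m : ℕ} (w : GraphWeight G) (v : Fin (m + 1) → X) :
    cliqueInd G v * w.w v = w.w v := by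
  unfold cliqueInd
  by_cases h : IsTupleClique G v
  · simp [h]
  · simp [h, w.eq_zero v h]

lemma notClique_cons {n : ℕ} {u : X} {v : Fin (n + 1) → X} (hv : ¬ IsTupleClique G v) :
    ¬ IsTupleClique G (Fin.cons u v) := by
  intro h
  apply hv
  have h2 := isTupleClique_comp (G := G) h (Fin.succ_injective _)
  have h3 : (Fin.cons u v) ∘ Fin.succ = v := by funext i; simp
  rwa [h3] at h2

/-- Lift a permutation of `Fin n` to one of `Fin (n+1)` fixing `0`. -/
def liftPerm {n : ℕ} (σ : Equiv.Perm (Fin n)) : Equiv.Perm (Fin (n + 1)) :=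
  Equiv.Perm.decomposeFin.symm (0, σ)

lemma liftPerm_zero {n : ℕ} (σ : Equiv.Perm (Fin n)) : liftPerm σ 0 = 0 := by
  simp [liftPerm]

lemma liftPerm_succ {n : ℕ} (σ : Equiv.Perm (Fin n)) (x : Fin n) :
    liftPerm σ x.succ = (σ x).succ := by
  simp [liftPerm]

lemma sgn_liftPerm {n : ℕ} (σ : Equiv.Perm (Fin n)) : sgn (liftPerm σ) = sgn σ := by
  simp [liftPerm, sgn]

lemma liftPerm_injective {n : ℕ} : Function.Injective (liftPerm (n := n)) := fun a b h => by
  have h2 := Equiv.Perm.decomposeFin.symm.injective h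
  exact (Prod.ext_iff.mp h2).2

lemma cons_comp_liftPerm {n : ℕ} (u : X) (v : Fin n → X) (σ : Equiv.Perm (Fin n)) :
    Fin.cons u v ∘ ⇑(liftPerm σ) = Fin.cons u (v ∘ ⇑σ) := by
  funext i
  refine Fin.cases ?_ (fun x => ?_) i
  · simp [Function.comp, liftPerm_zero]
  · simp [Function.comp, liftPerm_succ]

/-- The permutation of `Fin (n+1)` sending `0 ↦ j` and `x.succ ↦ j.succAbove (π x)`. -/
def permOf {n : ℕ} (j : Fin (n + 1)) (π : Equiv.Perm (Fin n)) : Equiv.Perm (Fin (n + 1)) :=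
  (Fin.cycleRange j)⁻¹ * liftPerm π

lemma permOf_zero {n : ℕ} (j : Fin (n + 1)) (π : Equiv.Perm (Fin n)) : permOf j π 0 = j := by
  have h : permOf j π 0 = (Fin.cycleRange j)⁻¹ 0 := by
    simp [permOf, Equiv.Perm.mul_apply, liftPerm_zero]
  rw [h, ← Fin.cycleRange_self j, Equiv.Perm.inv_def, Equiv.symm_apply_apply]

lemma permOf_succ {n : ℕ} (j : Fin (n + 1)) (π : Equiv.Perm (Fin n)) (x : Fin n) :
    permOf j π x.succ = j.succAbove (π x) := by
  have h : permOf j π x.succ = (Fin.cycleRange j)⁻¹ ((π x).succ) := by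
    simp [permOf, Equiv.Perm.mul_apply, liftPerm_succ]
  rw [h, ← Fin.cycleRange_succAbove j (π x), Equiv.Perm.inv_def, Equiv.symm_apply_apply]

lemma sgn_cycleRange {n : ℕ} (j : Fin (n + 1)) : sgn (Fin.cycleRange j) = (-1 : ℝ) ^ (j : ℕ) := by
  simp [sgn, Fin.sign_cycleRange]

lemma sgn_permOf {n : ℕ} (j : Fin (n + 1)) (π : Equiv.Perm (Fin n)) :
    sgn (permOf j π) = (-1 : ℝ) ^ (j : ℕ) * sgn π := by
  rw [permOf, sgn_mul, sgn_inv, sgn_liftPerm, sgn_cycleRange]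

lemma permOf_bijective {n : ℕ} :
    Function.Bijective (fun p : Fin (n + 1) × Equiv.Perm (Fin n) => permOf p.1 p.2) := by
  rw [Fintype.bijective_iff_injective_and_card]
  constructor
  · rintro ⟨j, π⟩ ⟨j', π'⟩ h
    simp only at h
    have hj : j = j' := by rw [← permOf_zero j π, ← permOf_zero j' π', h]
    subst hj
    simp only [permOf] at h
    have h2 : liftPerm π = liftPerm π' := mul_left_cancel h
    rw [Prod.mk.injEq]
    exact ⟨rfl, liftPerm_injective h2⟩
  · simp [Fintype.card_perm, Nat.factorial_succ]

lemma sum_sign_comp {k : ℕ} {α : (Fin (k + 1) → X) → ℝ}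
    (hα : ∀ (σ : Equiv.Perm (Fin (k + 1))) v, α (v ∘ ⇑σ) = sgn σ * α v)
    (v : Fin (k + 2) → X) :
    ∑ σ : Equiv.Perm (Fin (k + 2)), sgn σ * α (v ∘ ⇑σ ∘ Fin.succ)
      = ((k + 1).factorial : ℝ) * ∑ j : Fin (k + 2), (-1 : ℝ) ^ (j : ℕ) * α (v ∘ j.succAbove) := by
  rw [← Fintype.sum_bijective _ permOf_bijective
      (fun p : Fin (k + 2) × Equiv.Perm (Fin (k + 1)) =>
        sgn (permOf p.1 p.2) * α (v ∘ ⇑(permOf p.1 p.2) ∘ Fin.succ))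
      (fun σ => sgn σ * α (v ∘ ⇑σ ∘ Fin.succ)) (fun p => rfl)]
  rw [Fintype.sum_prod_type]
  have hterm : ∀ (j : Fin (k + 2)) (π : Equiv.Perm (Fin (k + 1))),
      sgn (permOf j π) * α (v ∘ ⇑(permOf j π) ∘ Fin.succ)
        = (-1 : ℝ) ^ (j : ℕ) * α (v ∘ j.succAbove) := by
    intro j π
    have hcomp : v ∘ ⇑(permOf j π) ∘ Fin.succ = (v ∘ j.succAbove) ∘ ⇑π := by
      funext x
      simp [Function.comp, permOf_succ]
    rw [hcomp, hα π, sgn_permOf]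
    linear_combination ((-1 : ℝ) ^ (j : ℕ) * α (v ∘ j.succAbove)) * sgn_mul_self π
  rw [Finset.mul_sum]
  refine Finset.sum_congr rfl fun j _ => ?_
  rw [Finset.sum_congr rfl fun π _ => hterm j π, Finset.sum_const, nsmul_eq_mul,
    Finset.card_univ, Fintype.card_perm, Fintype.card_fin]

lemma sum_succAbove_comp_perm {k : ℕ} {α : (Fin (k + 1) → X) → ℝ}
    (hα : ∀ (σ : Equiv.Perm (Fin (k + 1))) v, α (v ∘ ⇑σ) = sgn σ * α v)
    (τ : Equiv.Perm (Fin (k + 2))) (v : Fin (k + 2) → X) :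
    ∑ j : Fin (k + 2), (-1 : ℝ) ^ (j : ℕ) * α ((v ∘ ⇑τ) ∘ j.succAbove)
      = sgn τ * ∑ j : Fin (k + 2), (-1 : ℝ) ^ (j : ℕ) * α (v ∘ j.succAbove) := by
  have hfac : ((k + 1).factorial : ℝ) ≠ 0 := Nat.cast_ne_zero.mpr (Nat.factorial_ne_zero _)
  apply mul_left_cancel₀ hfac
  rw [← sum_sign_comp hα (v ∘ ⇑τ)]
  rw [show ((k + 1).factorial : ℝ) * (sgn τ * ∑ j : Fin (k + 2), (-1 : ℝ) ^ (j : ℕ) *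
      α (v ∘ j.succAbove)) = sgn τ * (((k + 1).factorial : ℝ) *
      ∑ j : Fin (k + 2), (-1 : ℝ) ^ (j : ℕ) * α (v ∘ j.succAbove)) from by ring]
  rw [← sum_sign_comp hα v, Finset.mul_sum]
  refine Fintype.sum_bijective (fun σ => τ * σ) (Group.mulLeft_bijective τ) _ _ fun σ => ?_
  have hc : (v ∘ ⇑τ) ∘ ⇑σ ∘ Fin.succ = v ∘ ⇑(τ * σ) ∘ Fin.succ := by
    funext x; simp [Function.comp, Equiv.Perm.mul_apply]
  rw [hc, sgn_mul]
  linear_combination (-(sgn σ * α (v ∘ ⇑(τ * σ) ∘ Fin.succ))) * sgn_mul_self τ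

end AuxLemmas
section FormLemmas

lemma isGraphForm_zero {k : ℕ} : IsGraphForm G k (0 : (Fin (k + 1) → X) → ℝ) :=
  ⟨fun _ _ => rfl, fun σ v => by simp⟩

lemma isGraphForm_add {k : ℕ} {a b : (Fin (k + 1) → X) → ℝ}
    (ha : IsGraphForm G k a) (hb : IsGraphForm G k b) : IsGraphForm G k (a + b) :=
  ⟨fun v hv => by simp [Pi.add_apply, ha.1 v hv, hb.1 v hv],
   fun σ v => by simp only [Pi.add_apply, ha.2 σ v, hb.2 σ v]; ring⟩

lemma isGraphForm_smul {k : ℕ} (c : ℝ) {a : (Fin (k + 1) → X) → ℝ}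
    (ha : IsGraphForm G k a) : IsGraphForm G k (c • a) :=
  ⟨fun v hv => by simp [Pi.smul_apply, ha.1 v hv],
   fun σ v => by simp only [Pi.smul_apply, ha.2 σ v, smul_eq_mul]; ring⟩

lemma isGraphForm_sub {k : ℕ} {a b : (Fin (k + 1) → X) → ℝ}
    (ha : IsGraphForm G k a) (hb : IsGraphForm G k b) : IsGraphForm G k (a - b) :=
  ⟨fun v hv => by simp [Pi.sub_apply, ha.1 v hv, hb.1 v hv],
   fun σ v => by simp only [Pi.sub_apply, ha.2 σ v, hb.2 σ v]; ring⟩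

lemma gd_isForm {k : ℕ} {α : (Fin (k + 1) → X) → ℝ} (hα : IsGraphForm G k α) :
    IsGraphForm G (k + 1) (gd G α) := by
  constructor
  · intro v hv
    unfold gd cliqueInd
    simp [hv]
  · intro σ v
    have hskew : ∀ (τ : Equiv.Perm (Fin (k + 1))) v', α (v' ∘ ⇑τ) = sgn τ * α v' := hα.2
    show cliqueInd G (v ∘ ⇑σ) * _ = _
    rw [cliqueInd_comp_perm, sum_succAbove_comp_perm hskew σ v]
    show cliqueInd G v * (sgn σ * _) = sgn σ * (cliqueInd G v * _)
    ring

lemma gdelta_skew [Fintype X] (w : GraphWeight G) {k : ℕ} {γ : (Fin (k + 2) → X) → ℝ}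
    (hγ : ∀ (σ : Equiv.Perm (Fin (k + 2))) v, γ (v ∘ ⇑σ) = sgn σ * γ v)
    (σ : Equiv.Perm (Fin (k + 1))) (v : Fin (k + 1) → X) :
    gdelta w γ (v ∘ ⇑σ) = sgn σ * gdelta w γ v := by
  unfold gdelta
  rw [w.symm σ v]
  have hterm : ∀ u : X, γ (Fin.cons u (v ∘ ⇑σ)) * w.w (Fin.cons u (v ∘ ⇑σ))
      = sgn σ * (γ (Fin.cons u v) * w.w (Fin.cons u v)) := by
    intro u
    rw [← cons_comp_liftPerm u v σ, hγ (liftPerm σ), sgn_liftPerm, w.symm (liftPerm σ)]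
    ring
  rw [Finset.sum_congr rfl fun u _ => hterm u, ← Finset.mul_sum]
  ring

lemma gdelta_support [Fintype X] (w : GraphWeight G) {k : ℕ} (γ : (Fin (k + 2) → X) → ℝ)
    {v : Fin (k + 1) → X} (hv : ¬ IsTupleClique G v) : gdelta w γ v = 0 := by
  unfold gdelta
  rw [Finset.sum_eq_zero fun u _ => by rw [w.eq_zero _ (notClique_cons hv), mul_zero], mul_zero]

lemma gdelta_isForm [Fintype X] (w : GraphWeight G) {k : ℕ} {γ : (Fin (k + 2) → X) → ℝ}
    (hγ : IsGraphForm G (k + 1) γ) : IsGraphForm G k (gdelta w γ) :=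
  ⟨fun _ hv => gdelta_support w γ hv, fun σ v => gdelta_skew w hγ.2 σ v⟩

lemma sum_comp_perm [Fintype X] {m : ℕ} (σ : Equiv.Perm (Fin m)) (f : (Fin m → X) → ℝ) :
    ∑ v : Fin m → X, f (v ∘ ⇑σ) = ∑ v : Fin m → X, f v := by
  apply Fintype.sum_bijective (fun v : Fin m → X => v ∘ ⇑σ) ?_ _ _ (fun v => rfl)
  constructor
  · intro a b h
    funext i
    have h2 := congrFun h (σ.symm i)
    simpa using h2
  · intro b
    refine ⟨b ∘ ⇑σ.symm, ?_⟩
    funext i; simp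

lemma sum_cons_split [Fintype X] {m : ℕ} (f : (Fin (m + 1) → X) → ℝ) :
    ∑ v : Fin (m + 1) → X, f v = ∑ u : X, ∑ v : Fin m → X, f (Fin.cons u v) := by
  have hbij : Function.Bijective (fun p : X × (Fin m → X) => (Fin.cons p.1 p.2 : Fin (m + 1) → X)) := by
    constructor
    · rintro ⟨u, a⟩ ⟨u', a'⟩ h
      simp only [Prod.mk.injEq] at h ⊢
      constructor
      · have h0 := congrFun h 0
        simpa using h0
      · funext i
        have hs := congrFun h i.succ
        simpa using hs
    · intro b
      refine ⟨(b 0, fun i => b i.succ), ?_⟩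
      funext i
      refine Fin.cases ?_ (fun x => ?_) i <;> simp
  have h1 : ∑ p : X × (Fin m → X), f (Fin.cons p.1 p.2) = ∑ v : Fin (m + 1) → X, f v :=
    Fintype.sum_bijective (fun p : X × (Fin m → X) => (Fin.cons p.1 p.2 : Fin (m + 1) → X)) hbij
      (fun p => f (Fin.cons p.1 p.2)) f fun p => rfl
  rw [← h1, Fintype.sum_prod_type]

end FormLemmas

section InnerLemmas

variable [Fintype X]

lemma formInner_comm (w : GraphWeight G) {k : ℕ} (a b : (Fin (k + 1) → X) → ℝ) :
    formInner w a b = formInner w b a := by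
  unfold formInner
  congr 1
  exact Finset.sum_congr rfl fun v _ => by ring

lemma formInner_add_left (w : GraphWeight G) {k : ℕ} (a b c : (Fin (k + 1) → X) → ℝ) :
    formInner w (a + b) c = formInner w a c + formInner w b c := by
  unfold formInner
  rw [← mul_add, ← Finset.sum_add_distrib]
  congr 1
  exact Finset.sum_congr rfl fun v _ => by simp only [Pi.add_apply]; ring

lemma formInner_add_right (w : GraphWeight G) {k : ℕ} (a b c : (Fin (k + 1) → X) → ℝ) :
    formInner w a (b + c) = formInner w a b + formInner w a c := by
  rw [formInner_comm w a (b + c), formInner_add_left, formInner_comm w b a, formInner_comm w c a]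

lemma formInner_smul_left (w : GraphWeight G) {k : ℕ} (c : ℝ) (a b : (Fin (k + 1) → X) → ℝ) :
    formInner w (c • a) b = c * formInner w a b := by
  unfold formInner
  rw [Finset.sum_congr rfl fun v _ =>
    (by simp only [Pi.smul_apply, smul_eq_mul]; ring :
      (c • a) v * b v * w.w v = c * (a v * b v * w.w v)), ← Finset.mul_sum]
  ring

lemma formInner_zero_left (w : GraphWeight G) {k : ℕ} (b : (Fin (k + 1) → X) → ℝ) :
    formInner w 0 b = 0 := by
  unfold formInner
  rw [Finset.sum_eq_zero fun v _ => by simp, mul_zero]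

lemma formInner_zero_right (w : GraphWeight G) {k : ℕ} (a : (Fin (k + 1) → X) → ℝ) :
    formInner w a 0 = 0 := by
  rw [formInner_comm, formInner_zero_left]

lemma w_nonneg (w : GraphWeight G) {m : ℕ} (v : Fin (m + 1) → X) : 0 ≤ w.w v := by
  by_cases h : IsTupleClique G v
  · exact (w.pos v h).le
  · rw [w.eq_zero v h]

lemma formInner_self_nonneg (w : GraphWeight G) {k : ℕ} (a : (Fin (k + 1) → X) → ℝ) :
    0 ≤ formInner w a a := by
  unfold formInner
  apply mul_nonneg (inv_nonneg.mpr (Nat.cast_nonneg _))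
  exact Finset.sum_nonneg fun v _ => mul_nonneg (mul_self_nonneg _) (w_nonneg w v)

lemma eq_zero_of_formInner_self (w : GraphWeight G) {k : ℕ} {a : (Fin (k + 1) → X) → ℝ}
    (hsupp : ∀ v, ¬ IsTupleClique G v → a v = 0)
    (h : formInner w a a = 0) : a = 0 := by
  unfold formInner at h
  have hfac : (((k + 1).factorial : ℝ))⁻¹ ≠ 0 :=
    inv_ne_zero (Nat.cast_ne_zero.mpr (Nat.factorial_ne_zero _))
  have hsum : ∑ v : Fin (k + 1) → X, a v * a v * w.w v = 0 := by
    rcases mul_eq_zero.mp h with h' | h'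
    · exact absurd h' hfac
    · exact h'
  have hterm := (Finset.sum_eq_zero_iff_of_nonneg
    (fun v _ => mul_nonneg (mul_self_nonneg _) (w_nonneg w v))).mp hsum
  funext v
  by_cases hv : IsTupleClique G v
  · have h1 := hterm v (Finset.mem_univ v)
    have hw := w.pos v hv
    have h2 : a v * a v = 0 := by
      rcases mul_eq_zero.mp h1 with h' | h'
      · exact h'
      · exact absurd h' hw.ne'
    simpa using mul_self_eq_zero.mp h2
  · simpa using hsupp v hv

end InnerLemmas
section Adjoint

variable [Fintype X]

lemma gd_adjoint (w : GraphWeight G) {k : ℕ} (β : (Fin (k + 1) → X) → ℝ)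
    {γ : (Fin (k + 2) → X) → ℝ}
    (hγ : ∀ (σ : Equiv.Perm (Fin (k + 2))) v, γ (v ∘ ⇑σ) = sgn σ * γ v) :
    formInner w (gd G β) γ = formInner w β (gdelta w γ) := by
  have step1 : ∀ v : Fin (k + 2) → X, gd G β v * γ v * w.w v
      = ∑ j : Fin (k + 2), (-1 : ℝ) ^ (j : ℕ) * (β (v ∘ j.succAbove) * γ v * w.w v) := by
    intro v
    unfold gd
    rw [show cliqueInd G v * (∑ j : Fin (k + 2), (-1 : ℝ) ^ (j : ℕ) * β (v ∘ j.succAbove)) *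
        γ v * w.w v
        = (∑ j : Fin (k + 2), (-1 : ℝ) ^ (j : ℕ) * β (v ∘ j.succAbove)) * (γ v * (cliqueInd G v * w.w v))
        from by ring, cliqueInd_mul_w, Finset.sum_mul]
    exact Finset.sum_congr rfl fun j _ => by ring
  have step2 : ∀ j : Fin (k + 2),
      (∑ v : Fin (k + 2) → X, (-1 : ℝ) ^ (j : ℕ) * (β (v ∘ j.succAbove) * γ v * w.w v))
      = ∑ v : Fin (k + 2) → X, β (v ∘ Fin.succ) * γ v * w.w v := by
    intro j
    rw [← sum_comp_perm (Fin.cycleRange j)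
      (fun v => (-1 : ℝ) ^ (j : ℕ) * (β (v ∘ j.succAbove) * γ v * w.w v))]
    apply Finset.sum_congr rfl
    intro v _
    have h1 : (v ∘ ⇑(Fin.cycleRange j)) ∘ j.succAbove = v ∘ Fin.succ := by
      funext x; simp [Function.comp]
    have h2 : γ (v ∘ ⇑(Fin.cycleRange j)) = (-1 : ℝ) ^ (j : ℕ) * γ v := by
      rw [hγ (Fin.cycleRange j) v, sgn_cycleRange]
    have h3 : w.w (v ∘ ⇑(Fin.cycleRange j)) = w.w v := w.symm _ v
    show (-1 : ℝ) ^ (j : ℕ) * (β ((v ∘ ⇑(Fin.cycleRange j)) ∘ j.succAbove) *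
      γ (v ∘ ⇑(Fin.cycleRange j)) * w.w (v ∘ ⇑(Fin.cycleRange j))) = _
    rw [h1, h2, h3]
    have h4 : (-1 : ℝ) ^ (j : ℕ) * (-1 : ℝ) ^ (j : ℕ) = 1 := by
      rw [← pow_add]; exact Even.neg_one_pow ⟨(j : ℕ), rfl⟩
    linear_combination (β (v ∘ Fin.succ) * γ v * w.w v) * h4
  have step3 : ∑ v : Fin (k + 2) → X, β (v ∘ Fin.succ) * γ v * w.w v
      = ∑ v : Fin (k + 1) → X, β v * (∑ u : X, γ (Fin.cons u v) * w.w (Fin.cons u v)) := by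
    rw [sum_cons_split (fun v => β (v ∘ Fin.succ) * γ v * w.w v), Finset.sum_comm]
    apply Finset.sum_congr rfl
    intro v _
    rw [Finset.mul_sum]
    apply Finset.sum_congr rfl
    intro u _
    have hc : (Fin.cons u v : Fin (k + 2) → X) ∘ Fin.succ = v := by funext i; simp
    rw [hc]; ring
  have step4 : ∀ v : Fin (k + 1) → X, β v * gdelta w γ v * w.w v
      = β v * (∑ u : X, γ (Fin.cons u v) * w.w (Fin.cons u v)) := by
    intro v
    unfold gdelta
    by_cases hv : IsTupleClique G v
    · have hw := (w.pos v hv).ne'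
      field_simp
    · rw [w.eq_zero v hv,
        Finset.sum_eq_zero fun u _ => by rw [w.eq_zero _ (notClique_cons hv), mul_zero]]
      simp
  unfold formInner
  rw [Finset.sum_congr rfl fun v _ => step1 v, Finset.sum_comm,
    Finset.sum_congr rfl fun j _ => step2 j, Finset.sum_const, Finset.card_univ,
    Fintype.card_fin, step3, Finset.sum_congr rfl fun v _ => step4 v]
  rw [nsmul_eq_mul]
  have h5 : ((k + 1 + 1).factorial : ℝ) = ((k : ℝ) + 2) * ((k + 1).factorial : ℝ) := by
    rw [Nat.factorial_succ]; push_cast; ring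
  have h6 : ((k + 1).factorial : ℝ) ≠ 0 := Nat.cast_ne_zero.mpr (Nat.factorial_ne_zero _)
  have h7 : ((k : ℝ) + 2) ≠ 0 := by positivity
  rw [h5]
  push_cast
  field_simp

lemma gdelta_gdelta (w : GraphWeight G) {k : ℕ} {γ : (Fin (k + 3) → X) → ℝ}
    (hγ : ∀ (σ : Equiv.Perm (Fin (k + 3))) v, γ (v ∘ ⇑σ) = sgn σ * γ v) :
    gdelta w (gdelta w γ) = 0 := by
  funext v
  show (w.w v)⁻¹ * ∑ u : X, gdelta w γ (Fin.cons u v) * w.w (Fin.cons u v) = 0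
  have key : ∀ u : X, gdelta w γ (Fin.cons u v) * w.w (Fin.cons u v)
      = ∑ u' : X, γ (Fin.cons u' (Fin.cons u v)) * w.w (Fin.cons u' (Fin.cons u v)) := by
    intro u
    unfold gdelta
    by_cases h : IsTupleClique G (Fin.cons u v)
    · have hw := (w.pos _ h).ne'
      field_simp
    · rw [w.eq_zero _ h, mul_zero,
        Finset.sum_eq_zero fun u' _ => by rw [w.eq_zero _ (notClique_cons h), mul_zero]]
  rw [Finset.sum_congr rfl fun u _ => key u]
  have swap01 : ∀ u u' : X, γ (Fin.cons u' (Fin.cons u v)) * w.w (Fin.cons u' (Fin.cons u v))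
      = - (γ (Fin.cons u (Fin.cons u' v)) * w.w (Fin.cons u (Fin.cons u' v))) := by
    intro u u'
    have hc : (Fin.cons u' (Fin.cons u v) : Fin (k + 3) → X)
        = (Fin.cons u (Fin.cons u' v) : Fin (k + 3) → X) ∘ ⇑(Equiv.swap (0 : Fin (k + 3)) 1) := by
      funext i
      refine Fin.cases ?_ (fun x => ?_) i
      · simp only [Function.comp_apply, Equiv.swap_apply_left, Fin.cons_zero]
        rw [← Fin.succ_zero_eq_one, Fin.cons_succ, Fin.cons_zero]
      · refine Fin.cases ?_ (fun x' => ?_) x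
        · rw [Fin.cons_succ, Fin.cons_zero, Function.comp_apply, Fin.succ_zero_eq_one,
            Equiv.swap_apply_right, Fin.cons_zero]
        · have hne0 : x'.succ.succ ≠ (0 : Fin (k + 3)) := Fin.succ_ne_zero _
          have hne1 : x'.succ.succ ≠ (1 : Fin (k + 3)) := by
            rw [← Fin.succ_zero_eq_one]
            intro hcon
            exact Fin.succ_ne_zero x' (Fin.succ_injective _ hcon)
          simp only [Function.comp_apply, Equiv.swap_apply_of_ne_of_ne hne0 hne1,
            Fin.cons_succ]
    have hs : sgn (Equiv.swap (0 : Fin (k + 3)) 1) = -1 := by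
      have : (0 : Fin (k + 3)) ≠ 1 := by
        rw [← Fin.succ_zero_eq_one]
        exact (Fin.succ_ne_zero 0).symm
      simp [sgn, Equiv.Perm.sign_swap this]
    rw [hc, hγ (Equiv.swap 0 1), w.symm (Equiv.swap 0 1), hs]
    ring
  have hzero : ∑ u : X, ∑ u' : X,
      γ (Fin.cons u' (Fin.cons u v)) * w.w (Fin.cons u' (Fin.cons u v)) = 0 := by
    have hneg : ∑ u : X, ∑ u' : X,
        γ (Fin.cons u' (Fin.cons u v)) * w.w (Fin.cons u' (Fin.cons u v))
        = - ∑ u : X, ∑ u' : X,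
          γ (Fin.cons u' (Fin.cons u v)) * w.w (Fin.cons u' (Fin.cons u v)) := by
      nth_rewrite 1 [Finset.sum_comm]
      rw [show (∑ u' : X, ∑ u : X,
          γ (Fin.cons u' (Fin.cons u v)) * w.w (Fin.cons u' (Fin.cons u v)))
          = ∑ u : X, ∑ u' : X,
            (- (γ (Fin.cons u' (Fin.cons u v)) * w.w (Fin.cons u' (Fin.cons u v)))) from
        Finset.sum_congr rfl fun u _ => Finset.sum_congr rfl fun u' _ => swap01 u' u]
      simp [Finset.sum_neg_distrib]
    linarith
  rw [hzero, mul_zero]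

end Adjoint
section Linearity

lemma gd_add {k : ℕ} (a b : (Fin (k + 1) → X) → ℝ) : gd G (a + b) = gd G a + gd G b := by
  funext v
  simp only [gd, Pi.add_apply]
  rw [show (∑ j : Fin (k + 2), (-1 : ℝ) ^ (j : ℕ) * (a (v ∘ j.succAbove) + b (v ∘ j.succAbove)))
      = (∑ j : Fin (k + 2), (-1 : ℝ) ^ (j : ℕ) * a (v ∘ j.succAbove))
        + ∑ j : Fin (k + 2), (-1 : ℝ) ^ (j : ℕ) * b (v ∘ j.succAbove) from by
    rw [← Finset.sum_add_distrib]; exact Finset.sum_congr rfl fun j _ => by ring]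
  ring

lemma gd_smul {k : ℕ} (c : ℝ) (a : (Fin (k + 1) → X) → ℝ) : gd G (c • a) = c • gd G a := by
  funext v
  simp only [gd, Pi.smul_apply, smul_eq_mul]
  rw [show (∑ j : Fin (k + 2), (-1 : ℝ) ^ (j : ℕ) * (c * a (v ∘ j.succAbove)))
      = c * ∑ j : Fin (k + 2), (-1 : ℝ) ^ (j : ℕ) * a (v ∘ j.succAbove) from by
    rw [Finset.mul_sum]; exact Finset.sum_congr rfl fun j _ => by ring]
  ring

lemma gd_sub {k : ℕ} (a b : (Fin (k + 1) → X) → ℝ) : gd G (a - b) = gd G a - gd G b := by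
  funext v
  simp only [gd, Pi.sub_apply]
  rw [show (∑ j : Fin (k + 2), (-1 : ℝ) ^ (j : ℕ) * (a (v ∘ j.succAbove) - b (v ∘ j.succAbove)))
      = (∑ j : Fin (k + 2), (-1 : ℝ) ^ (j : ℕ) * a (v ∘ j.succAbove))
        - ∑ j : Fin (k + 2), (-1 : ℝ) ^ (j : ℕ) * b (v ∘ j.succAbove) from by
    rw [← Finset.sum_sub_distrib]; exact Finset.sum_congr rfl fun j _ => by ring]
  ring

variable [Fintype X]

lemma gdelta_add (w : GraphWeight G) {k : ℕ} (a b : (Fin (k + 2) → X) → ℝ) :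
    gdelta w (a + b) = gdelta w a + gdelta w b := by
  funext v
  simp only [gdelta, Pi.add_apply]
  rw [show (∑ u : X, (a (Fin.cons u v) + b (Fin.cons u v)) * w.w (Fin.cons u v))
      = (∑ u : X, a (Fin.cons u v) * w.w (Fin.cons u v))
        + ∑ u : X, b (Fin.cons u v) * w.w (Fin.cons u v) from by
    rw [← Finset.sum_add_distrib]; exact Finset.sum_congr rfl fun u _ => by ring]
  ring

lemma gdelta_smul (w : GraphWeight G) {k : ℕ} (c : ℝ) (a : (Fin (k + 2) → X) → ℝ) :
    gdelta w (c • a) = c • gdelta w a := by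
  funext v
  simp only [gdelta, Pi.smul_apply, smul_eq_mul]
  rw [show (∑ u : X, (c * a (Fin.cons u v)) * w.w (Fin.cons u v))
      = c * ∑ u : X, a (Fin.cons u v) * w.w (Fin.cons u v) from by
    rw [Finset.mul_sum]; exact Finset.sum_congr rfl fun u _ => by ring]
  ring

lemma gdelta_sub (w : GraphWeight G) {k : ℕ} (a b : (Fin (k + 2) → X) → ℝ) :
    gdelta w (a - b) = gdelta w a - gdelta w b := by
  funext v
  simp only [gdelta, Pi.sub_apply]
  rw [show (∑ u : X, (a (Fin.cons u v) - b (Fin.cons u v)) * w.w (Fin.cons u v))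
      = (∑ u : X, a (Fin.cons u v) * w.w (Fin.cons u v))
        - ∑ u : X, b (Fin.cons u v) * w.w (Fin.cons u v) from by
    rw [← Finset.sum_sub_distrib]; exact Finset.sum_congr rfl fun u _ => by ring]
  ring

lemma hodgeLap_add (w : GraphWeight G) (r : ℕ) (a b : (Fin (r + 1) → X) → ℝ) :
    hodgeLap G w r (a + b) = hodgeLap G w r a + hodgeLap G w r b := by
  cases r with
  | zero => simp only [hodgeLap, gd_add, gdelta_add]
  | succ r =>
    simp only [hodgeLap, gd_add, gdelta_add]
    abel

lemma hodgeLap_smul (w : GraphWeight G) (r : ℕ) (c : ℝ) (a : (Fin (r + 1) → X) → ℝ) :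
    hodgeLap G w r (c • a) = c • hodgeLap G w r a := by
  cases r with
  | zero => simp only [hodgeLap, gd_smul, gdelta_smul]
  | succ r =>
    simp only [hodgeLap, gd_smul, gdelta_smul, smul_add]

lemma hodgeLap_sub (w : GraphWeight G) (r : ℕ) (a b : (Fin (r + 1) → X) → ℝ) :
    hodgeLap G w r (a - b) = hodgeLap G w r a - hodgeLap G w r b := by
  cases r with
  | zero => simp only [hodgeLap, gd_sub, gdelta_sub]
  | succ r =>
    simp only [hodgeLap, gd_sub, gdelta_sub]
    abel

lemma hodgeLap_isForm (w : GraphWeight G) {r : ℕ} {a : (Fin (r + 1) → X) → ℝ}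
    (ha : IsGraphForm G r a) : IsGraphForm G r (hodgeLap G w r a) := by
  cases r with
  | zero => exact gdelta_isForm w (gd_isForm ha)
  | succ r =>
    exact isGraphForm_add (gdelta_isForm w (gd_isForm ha)) (gd_isForm (gdelta_isForm w ha))

lemma hodgeLap_symm (w : GraphWeight G) {r : ℕ} {a b : (Fin (r + 1) → X) → ℝ}
    (ha : IsGraphForm G r a) (hb : IsGraphForm G r b) :
    formInner w (hodgeLap G w r a) b = formInner w a (hodgeLap G w r b) := by
  have key1 : ∀ {x y : (Fin (r + 1) → X) → ℝ}, IsGraphForm G r x → IsGraphForm G r y →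
      formInner w (gdelta w (gd G x)) y = formInner w (gd G x) (gd G y) := by
    intro x y hx hy
    rw [formInner_comm, ← gd_adjoint w y (gd_isForm hx).2]
    exact formInner_comm w (gd G y) (gd G x)
  cases r with
  | zero =>
    show formInner w (gdelta w (gd G a)) b = formInner w a (gdelta w (gd G b))
    rw [key1 ha hb]
    exact gd_adjoint w a (gd_isForm hb).2
  | succ r =>
    show formInner w (gdelta w (gd G a) + gd G (gdelta w a)) b
        = formInner w a (gdelta w (gd G b) + gd G (gdelta w b))
    rw [formInner_add_left, formInner_add_right, key1 ha hb, gd_adjoint w a (gd_isForm hb).2]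
    congr 1
    rw [gd_adjoint w (gdelta w a) hb.2, formInner_comm w a (gd G (gdelta w b)),
      gd_adjoint w (gdelta w b) ha.2]
    exact formInner_comm w (gdelta w a) (gdelta w b)

end Linearity

section Harmonic

variable [Fintype X]

lemma harmonic_zero_case (w : GraphWeight G) {η : (Fin 1 → X) → ℝ} (hη : IsGraphForm G 0 η)
    (h : gdelta w (gd G η) = 0) : gd G η = 0 := by
  have h1 : formInner w (gd G η) (gd G η) = 0 := by
    rw [gd_adjoint w η (gd_isForm hη).2, h, formInner_zero_right]
  exact eq_zero_of_formInner_self w (gd_isForm hη).1 h1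

lemma harmonic_succ_case (w : GraphWeight G) {r : ℕ} {η : (Fin (r + 2) → X) → ℝ}
    (hη : IsGraphForm G (r + 1) η)
    (h : gdelta w (gd G η) + gd G (gdelta w η) = 0) :
    gd G η = 0 ∧ gdelta w η = 0 := by
  have hA : formInner w (gd G η) (gd G η) = formInner w η (gdelta w (gd G η)) :=
    gd_adjoint w η (gd_isForm hη).2
  have hB : formInner w (gd G (gdelta w η)) η = formInner w (gdelta w η) (gdelta w η) :=
    gd_adjoint w (gdelta w η) hη.2
  have hsum : formInner w (gd G η) (gd G η)
      + formInner w (gdelta w η) (gdelta w η) = 0 := by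
    rw [hA, ← hB, formInner_comm w (gd G (gdelta w η)) η,
      ← formInner_add_right w η _ _, h, formInner_zero_right]
  have hn1 := formInner_self_nonneg w (gd G η)
  have hn2 := formInner_self_nonneg w (gdelta w η)
  have h1 : formInner w (gd G η) (gd G η) = 0 := by linarith
  have h2 : formInner w (gdelta w η) (gdelta w η) = 0 := by linarith
  exact ⟨eq_zero_of_formInner_self w (gd_isForm hη).1 h1,
    eq_zero_of_formInner_self w (gdelta_isForm w hη).1 h2⟩

end Harmonic

section Decomp

variable [Fintype X]

/-- The submodule of `k`-forms. -/
def formSub (G : SimpleGraph X) (k : ℕ) : Submodule ℝ ((Fin (k + 1) → X) → ℝ) where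
  carrier := {a | IsGraphForm G k a}
  zero_mem' := isGraphForm_zero
  add_mem' := fun ha hb => isGraphForm_add ha hb
  smul_mem' := fun c _ ha => isGraphForm_smul c ha

lemma formInner_smul_right (w : GraphWeight G) {k : ℕ} (c : ℝ) (a b : (Fin (k + 1) → X) → ℝ) :
    formInner w a (c • b) = c * formInner w a b := by
  rw [formInner_comm, formInner_smul_left, formInner_comm]

lemma exists_lap_decomp (w : GraphWeight G) (r : ℕ) (α : (Fin (r + 1) → X) → ℝ)
    (hα : IsGraphForm G r α) :
    ∃ ω, IsGraphForm G r ω ∧ ∃ η, IsGraphForm G r η ∧ hodgeLap G w r η = 0 ∧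
      α = hodgeLap G w r ω + η := by
  classical
  set V : Submodule ℝ ((Fin (r + 1) → X) → ℝ) := formSub G r with hV
  let L : ((Fin (r + 1) → X) → ℝ) →ₗ[ℝ] ((Fin (r + 1) → X) → ℝ) :=
    { toFun := hodgeLap G w r
      map_add' := hodgeLap_add w r
      map_smul' := hodgeLap_smul w r }
  have hpres : ∀ x ∈ V, L x ∈ V := fun x hx => hodgeLap_isForm w hx
  let T : V →ₗ[ℝ] V := L.restrict hpres
  let B : LinearMap.BilinForm ℝ V :=
    LinearMap.mk₂ ℝ (fun a b : V => formInner w a.1 b.1)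
      (fun a b c => by simpa using formInner_add_left w a.1 b.1 c.1)
      (fun c a b => by simpa using formInner_smul_left w c a.1 b.1)
      (fun a b c => by simpa using formInner_add_right w a.1 b.1 c.1)
      (fun c a b => by simpa using formInner_smul_right w c a.1 b.1)
  have hBapp : ∀ a b : V, B a b = formInner w a.1 b.1 := fun a b => rfl
  have hrefl : B.IsRefl := by
    intro a b h
    rw [hBapp, formInner_comm, ← hBapp]
    exact h
  have hsymmT : ∀ a b : V, B (T a) b = B a (T b) := fun a b =>
    hodgeLap_symm w a.2 b.2
  set W : Submodule ℝ V := LinearMap.range T with hW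
  have hnondeg : (B.restrict W).Nondegenerate := by
    constructor <;> intro m hm
    all_goals
      have h1 := hm m
      simp only [LinearMap.BilinForm.restrict_apply, LinearMap.domRestrict_apply, hBapp] at h1
      have h2 : (m : V) = 0 :=
        Subtype.ext (eq_zero_of_formInner_self w (m : V).2.1 h1)
      exact Subtype.ext h2
  have hcompl : IsCompl W (B.orthogonal W) :=
    LinearMap.BilinForm.isCompl_orthogonal_of_restrict_nondegenerate hrefl hnondeg
  have htop : W ⊔ B.orthogonal W = ⊤ := hcompl.sup_eq_top
  have hmem : (⟨α, hα⟩ : V) ∈ W ⊔ B.orthogonal W := htop ▸ Submodule.mem_top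
  obtain ⟨y, hy, z, hz, hsum⟩ := Submodule.mem_sup.mp hmem
  have hTz : T z = 0 := by
    have h3 : B (T z) (T z) = 0 := by
      rw [← hsymmT (T z) z]
      exact hz (T (T z)) ⟨T z, rfl⟩
    rw [hBapp] at h3
    exact Subtype.ext (eq_zero_of_formInner_self w (T z).2.1 h3)
  obtain ⟨ω, rfl⟩ := hy
  refine ⟨ω.1, ω.2, z.1, z.2, congrArg Subtype.val hTz, ?_⟩
  exact (congrArg Subtype.val hsum).symm

end Decomp
/-- Hodge decomposition `A^r(G) = d(A^{r-1}) ⊕ ℋ^r ⊕ δ(A^{r+1})`,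
orthogonal with respect to the weighted inner product, and the de Rham cohomology in
degree `r` is isomorphic to the space of harmonic forms: harmonic forms are closed, and
every closed form is cohomologous to a unique harmonic form. -/
theorem hodge_decomposition {X : Type*} [Fintype X] (G : SimpleGraph X)
    (w : GraphWeight G) (r : ℕ) :
    (∀ ξ ∈ exactPart G r, ∀ η, IsGraphForm G r η → hodgeLap G w r η = 0 →
        formInner w ξ η = 0) ∧
    (∀ ξ ∈ exactPart G r, ∀ γ, IsGraphForm G (r + 1) γ →
        formInner w ξ (gdelta w γ) = 0) ∧
    (∀ η, IsGraphForm G r η → hodgeLap G w r η = 0 →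
        ∀ γ, IsGraphForm G (r + 1) γ → formInner w η (gdelta w γ) = 0) ∧
    (∀ α, IsGraphForm G r α → ∃ ξ ∈ exactPart G r, ∃ η,
        IsGraphForm G r η ∧ hodgeLap G w r η = 0 ∧
        ∃ γ, IsGraphForm G (r + 1) γ ∧ α = ξ + η + gdelta w γ) ∧
    (∀ η, IsGraphForm G r η → hodgeLap G w r η = 0 → gd G η = 0) ∧
    (∀ α, IsGraphForm G r α → gd G α = 0 →
        ∃! η, IsGraphForm G r η ∧ hodgeLap G w r η = 0 ∧ (α - η) ∈ exactPart G r) := by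

  obtain _ | r := r
  · -- degree 0
    have hharm : ∀ η : (Fin (0 + 1) → X) → ℝ, IsGraphForm G 0 η → hodgeLap G w 0 η = 0 →
        gd G η = 0 := fun η hη h => harmonic_zero_case w hη h
    refine ⟨?_, ?_, ?_, ?_, fun η hη h => hharm η hη h, ?_⟩
    · intro ξ hξ η hη hh
      rw [Set.eq_of_mem_singleton hξ]
      exact formInner_zero_left w η
    · intro ξ hξ γ hγ
      rw [Set.eq_of_mem_singleton hξ]
      exact formInner_zero_left w _
    · intro η hη hh γ hγ
      rw [← gd_adjoint w η hγ.2, hharm η hη hh]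
      exact formInner_zero_left w γ
    · intro α hα
      obtain ⟨ω, hω, η, hη, hharmη, heq⟩ := exists_lap_decomp w 0 α hα
      refine ⟨0, rfl, η, hη, hharmη, gd G ω, gd_isForm hω, ?_⟩
      rw [heq]
      show gdelta w (gd G ω) + η = 0 + η + gdelta w (gd G ω)
      abel
    · intro α hα hdα
      obtain ⟨ω, hω, η, hη, hharmη, heq⟩ := exists_lap_decomp w 0 α hα
      set ρ : (Fin (0 + 1) → X) → ℝ := gdelta w (gd G ω) with hρ
      have heq' : α = ρ + η := heq
      have hρform : IsGraphForm G 0 ρ := gdelta_isForm w (gd_isForm hω)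
      have hρ1 : formInner w ρ α = formInner w ρ ρ + formInner w ρ η := by
        rw [heq', formInner_add_right]
      have hρ2 : formInner w ρ α = 0 := by
        rw [formInner_comm, hρ, ← gd_adjoint w α (gd_isForm hω).2, hdα]
        exact formInner_zero_left w _
      have hρ3 : formInner w ρ η = 0 := by
        rw [formInner_comm, hρ, ← gd_adjoint w η (gd_isForm hω).2, hharm η hη hharmη]
        exact formInner_zero_left w _
      have hρ0 : ρ = 0 := eq_zero_of_formInner_self w hρform.1 (by linarith)
      have hαη : α = η := by rw [heq', hρ0]; exact zero_add η
      refine ⟨η, ⟨hη, hharmη, ?_⟩, ?_⟩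
      · show α - η ∈ exactPart G 0
        have hz : α - η = 0 := by rw [hαη, sub_self]
        rw [hz]
        rfl
      · rintro η' ⟨hη', hharm', hmem'⟩
        have h1 : α - η' = 0 := Set.eq_of_mem_singleton hmem'
        exact (sub_eq_zero.mp h1).symm.trans hαη
  · -- degree r + 1
    have hparts : ∀ η : (Fin (r + 1 + 1) → X) → ℝ, IsGraphForm G (r + 1) η →
        hodgeLap G w (r + 1) η = 0 → gd G η = 0 ∧ gdelta w η = 0 :=
      fun η hη h => harmonic_succ_case w hη h
    refine ⟨?_, ?_, ?_, ?_, fun η hη h => (hparts η hη h).1, ?_⟩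
    · intro ξ hξ η hη hh
      obtain ⟨β, hβ, rfl⟩ := hξ
      rw [gd_adjoint w β hη.2, (hparts η hη hh).2]
      exact formInner_zero_right w β
    · intro ξ hξ γ hγ
      obtain ⟨β, hβ, rfl⟩ := hξ
      rw [gd_adjoint w β (gdelta_isForm w hγ).2, gdelta_gdelta w hγ.2]
      exact formInner_zero_right w β
    · intro η hη hh γ hγ
      rw [← gd_adjoint w η hγ.2, (hparts η hη hh).1]
      exact formInner_zero_left w γ
    · intro α hα
      obtain ⟨ω, hω, η, hη, hharmη, heq⟩ := exists_lap_decomp w (r + 1) α hα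
      have heq' : α = (gdelta w (gd G ω) + gd G (gdelta w ω)) + η := heq
      refine ⟨gd G (gdelta w ω), ⟨gdelta w ω, gdelta_isForm w hω, rfl⟩, η, hη, hharmη,
        gd G ω, gd_isForm hω, ?_⟩
      rw [heq']
      abel
    · intro α hα hdα
      obtain ⟨ω, hω, η, hη, hharmη, heq⟩ := exists_lap_decomp w (r + 1) α hα
      set ρ : (Fin (r + 1 + 1) → X) → ℝ := gdelta w (gd G ω) with hρ
      have heq' : α = (ρ + gd G (gdelta w ω)) + η := heq
      have hdη : gd G η = 0 := (hparts η hη hharmη).1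
      have hρform : IsGraphForm G (r + 1) ρ := gdelta_isForm w (gd_isForm hω)
      have hρ1 : formInner w ρ α = (formInner w ρ ρ + formInner w ρ (gd G (gdelta w ω)))
          + formInner w ρ η := by
        rw [heq', formInner_add_right, formInner_add_right]
      have hρ2 : formInner w ρ α = 0 := by
        rw [formInner_comm, hρ, ← gd_adjoint w α (gd_isForm hω).2, hdα]
        exact formInner_zero_left w _
      have hρ3 : formInner w ρ η = 0 := by
        rw [formInner_comm, hρ, ← gd_adjoint w η (gd_isForm hω).2, hdη]
        exact formInner_zero_left w _
      have hρ4 : formInner w ρ (gd G (gdelta w ω)) = 0 := by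
        rw [formInner_comm, gd_adjoint w (gdelta w ω) hρform.2, hρ,
          gdelta_gdelta w (gd_isForm hω).2]
        exact formInner_zero_right w _
      have hρ0 : ρ = 0 := eq_zero_of_formInner_self w hρform.1 (by linarith)
      have hαη : α - η = gd G (gdelta w ω) := by
        rw [heq', hρ0]; abel
      refine ⟨η, ⟨hη, hharmη, ⟨gdelta w ω, gdelta_isForm w hω, hαη⟩⟩, ?_⟩
      rintro η' ⟨hη', hharm', β', hβ', heq2⟩
      have hdform : IsGraphForm G (r + 1) (η' - η) := isGraphForm_sub hη' hη
      have hdiff : η' - η = gd G (gdelta w ω - β') := by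
        rw [gd_sub, ← hαη, ← heq2]; abel
      have hdharm : hodgeLap G w (r + 1) (η' - η) = 0 := by
        rw [hodgeLap_sub, hharm', hharmη, sub_zero]
      have hδ : gdelta w (η' - η) = 0 := (hparts _ hdform hdharm).2
      have hinner : formInner w (η' - η) (η' - η) = 0 := by
        nth_rewrite 1 [hdiff]
        rw [gd_adjoint w _ hdform.2, hδ, formInner_zero_right]
      exact sub_eq_zero.mp (eq_zero_of_formInner_self w hdform.1 hinner)

end GraphHodge
end

section
/- Let (G,B,w) be a finite weighted graph with boundary and interior Ω, and φ ∈ A^k(∂Ω). If ω_1 and ω_2 are two k-forms on G with δdω_i = 0 in Ω and ω_i = φ on boundary (k+1)-cliques, then d(ω_1 − ω_2) = 0 on G and 𝐍(dω_1) = 𝐍(dω_2). Hence the Dirichlet-to-Neumann map T^{(k)}_{δd}(φ) = 𝐍(dω) is well defined. -/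
open scoped Classical

namespace GraphHodge


variable {X : Type*}

variable {G : SimpleGraph X}

/-- `(G, B)` is a graph with boundary `B`: no edges inside `B`, and every boundary
vertex is adjacent to some interior vertex. -/
def IsBoundary (G : SimpleGraph X) (B : Set X) : Prop :=
  (∀ a ∈ B, ∀ b ∈ B, ¬ G.Adj a b) ∧ ∀ b ∈ B, ∃ a, a ∉ B ∧ G.Adj b a

/-- A boundary tuple: a clique whose first vertex is in `B` and the rest interior. -/
def IsBdryTuple (G : SimpleGraph X) (B : Set X) {k : ℕ} (v : Fin (k + 1) → X) : Prop :=
  IsTupleClique G v ∧ v 0 ∈ B ∧ ∀ i : Fin k, v i.succ ∉ B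

/-- A boundary `k`-form: supported on boundary `(k+1)`-cliques and skew-symmetric in
its last `k` variables. -/
def IsBdryForm (G : SimpleGraph X) (B : Set X) (k : ℕ) (φ : (Fin (k + 1) → X) → ℝ) : Prop :=
  (∀ v, ¬ IsBdryTuple G B v → φ v = 0) ∧
  ∀ (σ : Equiv.Perm (Fin k)) (v : Fin (k + 1) → X),
    φ (Fin.cons (v 0) (fun i => v (σ i).succ)) = ((Equiv.Perm.sign σ : ℤ) : ℝ) * φ v

/-- Inner product over tuples entirely inside the interior `Ω = Bᶜ`. -/
noncomputable def innerInt [Fintype X] (w : GraphWeight G) (B : Set X) {k : ℕ}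
    (α β : (Fin (k + 1) → X) → ℝ) : ℝ :=
  (((k + 1).factorial : ℝ))⁻¹ *
    ∑ v : Fin (k + 1) → X, (if ∀ i, v i ∉ B then (1 : ℝ) else 0) * (α v * β v * w.w v)

/-- Boundary inner product: first vertex in `B`, the others interior. -/
noncomputable def innerBdry [Fintype X] (w : GraphWeight G) (B : Set X) {k : ℕ}
    (α β : (Fin (k + 1) → X) → ℝ) : ℝ :=
  ((k.factorial : ℝ))⁻¹ *
    ∑ v : Fin (k + 1) → X,
      (if v 0 ∈ B ∧ ∀ i : Fin k, v i.succ ∉ B then (1 : ℝ) else 0) * (α v * β v * w.w v)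

/-- The normal-trace operator `𝐍` on `(k+1)`-forms. -/
noncomputable def Nop [Fintype X] (w : GraphWeight G) (B : Set X) {k : ℕ}
    (α : (Fin (k + 2) → X) → ℝ) : (Fin (k + 1) → X) → ℝ :=
  fun v => (w.w v)⁻¹ *
    ∑ u : X, (if u ∉ B then (1 : ℝ) else 0) * α (Fin.cons u v) * w.w (Fin.cons u v)

/-- The Dirichlet-trace operator `𝐃`: forget the boundary vertex. -/
def Dop {k : ℕ} (α : (Fin (k + 1) → X) → ℝ) : (Fin (k + 2) → X) → ℝ :=
  fun v => α (fun i => v i.succ)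

lemma isTupleClique_comp_s10 {m : ℕ} (σ : Equiv.Perm (Fin m)) (v : Fin m → X) :
    IsTupleClique G (v ∘ ⇑σ) ↔ IsTupleClique G v := by
  constructor
  · intro h i j hij
    have := h (σ.symm i) (σ.symm j) (fun hh => hij (by simpa using congrArg σ hh))
    simpa using this
  · intro h i j hij
    exact h (σ i) (σ j) (fun hh => hij (σ.injective hh))

lemma cliqueInd_comp {m : ℕ} (σ : Equiv.Perm (Fin m)) (v : Fin m → X) :
    cliqueInd G (v ∘ ⇑σ) = cliqueInd G v := by
  unfold cliqueInd
  simp only [isTupleClique_comp_s10]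

lemma swap_succAbove_castSucc {k : ℕ} (i : Fin (k + 1)) (m : Fin (k + 1)) :
    Equiv.swap (Fin.castSucc i) i.succ ((Fin.castSucc i).succAbove m) = i.succ.succAbove m := by
  rcases lt_trichotomy (m : ℕ) (i : ℕ) with h | h | h
  · have h1 : (Fin.castSucc i).succAbove m = Fin.castSucc m := by
      apply Fin.succAbove_of_castSucc_lt
      simp only [Fin.lt_def, Fin.coe_castSucc]; omega
    have h2 : i.succ.succAbove m = Fin.castSucc m := by
      apply Fin.succAbove_of_castSucc_lt
      simp only [Fin.lt_def, Fin.coe_castSucc, Fin.val_succ]; omega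
    rw [h1, h2, Equiv.swap_apply_of_ne_of_ne]
    · simp only [ne_eq, Fin.ext_iff, Fin.coe_castSucc]; omega
    · simp only [ne_eq, Fin.ext_iff, Fin.coe_castSucc, Fin.val_succ]; omega
  · have hm : m = i := Fin.ext h
    subst hm
    have h1 : (Fin.castSucc m).succAbove m = m.succ := by
      apply Fin.succAbove_of_le_castSucc
      simp only [Fin.le_def]; omega
    have h2 : m.succ.succAbove m = Fin.castSucc m := by
      apply Fin.succAbove_of_castSucc_lt
      simp only [Fin.lt_def, Fin.coe_castSucc, Fin.val_succ]; omega
    rw [h1, h2, Equiv.swap_apply_right]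
  · have h1 : (Fin.castSucc i).succAbove m = m.succ := by
      apply Fin.succAbove_of_le_castSucc
      simp only [Fin.le_def, Fin.coe_castSucc]; omega
    have h2 : i.succ.succAbove m = m.succ := by
      apply Fin.succAbove_of_le_castSucc
      simp only [Fin.le_def, Fin.coe_castSucc, Fin.val_succ]; omega
    rw [h1, h2, Equiv.swap_apply_of_ne_of_ne]
    · simp only [ne_eq, Fin.ext_iff, Fin.coe_castSucc, Fin.val_succ]; omega
    · simp only [ne_eq, Fin.ext_iff, Fin.val_succ]; omega

lemma swap_succAbove_succ {k : ℕ} (i : Fin (k + 1)) (m : Fin (k + 1)) :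
    Equiv.swap (Fin.castSucc i) i.succ (i.succ.succAbove m) = (Fin.castSucc i).succAbove m := by
  rcases lt_trichotomy (m : ℕ) (i : ℕ) with h | h | h
  · have h1 : i.succ.succAbove m = Fin.castSucc m := by
      apply Fin.succAbove_of_castSucc_lt
      simp only [Fin.lt_def, Fin.coe_castSucc, Fin.val_succ]; omega
    have h2 : (Fin.castSucc i).succAbove m = Fin.castSucc m := by
      apply Fin.succAbove_of_castSucc_lt
      simp only [Fin.lt_def, Fin.coe_castSucc]; omega
    rw [h1, h2, Equiv.swap_apply_of_ne_of_ne]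
    · simp only [ne_eq, Fin.ext_iff, Fin.coe_castSucc]; omega
    · simp only [ne_eq, Fin.ext_iff, Fin.coe_castSucc, Fin.val_succ]; omega
  · have hm : m = i := Fin.ext h
    subst hm
    have h1 : m.succ.succAbove m = Fin.castSucc m := by
      apply Fin.succAbove_of_castSucc_lt
      simp only [Fin.lt_def, Fin.coe_castSucc, Fin.val_succ]; omega
    have h2 : (Fin.castSucc m).succAbove m = m.succ := by
      apply Fin.succAbove_of_le_castSucc
      simp only [Fin.le_def]; omega
    rw [h1, h2, Equiv.swap_apply_left]
  · have h1 : i.succ.succAbove m = m.succ := by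
      apply Fin.succAbove_of_le_castSucc
      simp only [Fin.le_def, Fin.coe_castSucc, Fin.val_succ]; omega
    have h2 : (Fin.castSucc i).succAbove m = m.succ := by
      apply Fin.succAbove_of_le_castSucc
      simp only [Fin.le_def, Fin.coe_castSucc]; omega
    rw [h1, h2, Equiv.swap_apply_of_ne_of_ne]
    · simp only [ne_eq, Fin.ext_iff, Fin.coe_castSucc, Fin.val_succ]; omega
    · simp only [ne_eq, Fin.ext_iff, Fin.val_succ]; omega

lemma gd_comp_swap {k : ℕ} {α : (Fin (k + 1) → X) → ℝ}
    (hsk : ∀ (σ : Equiv.Perm (Fin (k + 1))) (v : Fin (k + 1) → X),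
      α (v ∘ ⇑σ) = ((Equiv.Perm.sign σ : ℤ) : ℝ) * α v)
    (i : Fin (k + 1)) (v : Fin (k + 2) → X) :
    gd G α (v ∘ ⇑(Equiv.swap (Fin.castSucc i) i.succ)) = - gd G α v := by
  unfold gd
  rw [cliqueInd_comp]
  have hsum : (∑ j : Fin (k + 2), (-1 : ℝ) ^ (j : ℕ) *
        α ((v ∘ ⇑(Equiv.swap (Fin.castSucc i) i.succ)) ∘ j.succAbove))
      = ∑ j : Fin (k + 2), -((-1 : ℝ) ^ (j : ℕ) * α (v ∘ j.succAbove)) := by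
    apply Fintype.sum_equiv (Equiv.swap (Fin.castSucc i) i.succ)
    intro j
    by_cases hjc : j = Fin.castSucc i
    · subst hjc
      rw [Equiv.swap_apply_left]
      have hcomp : (v ∘ ⇑(Equiv.swap (Fin.castSucc i) i.succ)) ∘ (Fin.castSucc i).succAbove
          = v ∘ i.succ.succAbove := by
        funext m; exact congrArg v (swap_succAbove_castSucc i m)
      rw [hcomp]
      simp only [Fin.coe_castSucc, Fin.val_succ, pow_succ]
      ring
    · by_cases hjs : j = i.succ
      · subst hjs
        rw [Equiv.swap_apply_right]
        have hcomp : (v ∘ ⇑(Equiv.swap (Fin.castSucc i) i.succ)) ∘ (Fin.succ i).succAbove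
            = v ∘ (Fin.castSucc i).succAbove := by
          funext m; exact congrArg v (swap_succAbove_succ i m)
        rw [hcomp]
        simp only [Fin.coe_castSucc, Fin.val_succ, pow_succ]
        ring
      · rw [Equiv.swap_apply_of_ne_of_ne hjc hjs]
        obtain ⟨a, ha⟩ := Fin.exists_succAbove_eq (Ne.symm hjc)
        obtain ⟨b, hb⟩ := Fin.exists_succAbove_eq (Ne.symm hjs)
        have hab : a ≠ b := by
          intro hh
          exact (Fin.castSucc_lt_succ : Fin.castSucc i < i.succ).ne (by rw [← ha, ← hb, hh])
        have hcomp : (v ∘ ⇑(Equiv.swap (Fin.castSucc i) i.succ)) ∘ j.succAbove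
            = (v ∘ j.succAbove) ∘ ⇑(Equiv.swap a b) := by
          funext m
          show v (Equiv.swap (Fin.castSucc i) i.succ (j.succAbove m))
            = v (j.succAbove (Equiv.swap a b m))
          congr 1
          by_cases hma : m = a
          · subst hma; rw [ha, Equiv.swap_apply_left, Equiv.swap_apply_left, hb]
          · by_cases hmb : m = b
            · subst hmb; rw [hb, Equiv.swap_apply_right, Equiv.swap_apply_right, ha]
            · rw [Equiv.swap_apply_of_ne_of_ne hma hmb, Equiv.swap_apply_of_ne_of_ne]
              · intro hh; exact hma (j.succAbove_right_injective (hh.trans ha.symm))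
              · intro hh; exact hmb (j.succAbove_right_injective (hh.trans hb.symm))
        rw [hcomp, hsk (Equiv.swap a b), Equiv.Perm.sign_swap hab]
        push_cast
        ring
  rw [hsum, Finset.sum_neg_distrib]
  ring

lemma gd_comp_perm {k : ℕ} {α : (Fin (k + 1) → X) → ℝ}
    (hsk : ∀ (σ : Equiv.Perm (Fin (k + 1))) (v : Fin (k + 1) → X),
      α (v ∘ ⇑σ) = ((Equiv.Perm.sign σ : ℤ) : ℝ) * α v)
    (σ : Equiv.Perm (Fin (k + 2))) (v : Fin (k + 2) → X) :
    gd G α (v ∘ ⇑σ) = ((Equiv.Perm.sign σ : ℤ) : ℝ) * gd G α v := by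
  have hmem : σ ∈ Submonoid.closure
      (Set.range fun i : Fin (k + 1) ↦ Equiv.swap (Fin.castSucc i) i.succ) := by
    rw [Equiv.Perm.mclosure_swap_castSucc_succ]; exact Submonoid.mem_top σ
  revert v
  induction hmem using Submonoid.closure_induction with
  | mem τ hτ =>
    obtain ⟨i, rfl⟩ := hτ
    intro v
    rw [gd_comp_swap hsk i v, Equiv.Perm.sign_swap (Fin.castSucc_lt_succ : Fin.castSucc i < i.succ).ne]
    push_cast; ring
  | one => intro v; simp
  | mul a b ha hb iha ihb =>
    intro v
    have hc : v ∘ ⇑(a * b) = (v ∘ ⇑a) ∘ ⇑b := rfl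
    rw [hc, ihb, iha, map_mul]
    push_cast; ring

/-- well-definedness of the DtN map `T^{(k)}_{δd}`: two solutions of the
boundary value problem with the same boundary data have `d(ω₁ - ω₂) = 0` on `G`, and
the same normal trace `𝐍(dω)`. -/
theorem dtn_well_defined {X : Type*} [Fintype X] (G : SimpleGraph X) (B : Set X)
    (hB : IsBoundary G B) (w : GraphWeight G) (k : ℕ)
    (φ : (Fin (k + 1) → X) → ℝ) (hφ : IsBdryForm G B k φ)
    (ω₁ ω₂ : (Fin (k + 1) → X) → ℝ)
    (h₁ : IsGraphForm G k ω₁) (h₂ : IsGraphForm G k ω₂)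
    (hharm₁ : ∀ v : Fin (k + 1) → X, (∀ i, v i ∉ B) → gdelta w (gd G ω₁) v = 0)
    (hharm₂ : ∀ v : Fin (k + 1) → X, (∀ i, v i ∉ B) → gdelta w (gd G ω₂) v = 0)
    (hbv₁ : ∀ v : Fin (k + 1) → X, IsBdryTuple G B v → ω₁ v = φ v)
    (hbv₂ : ∀ v : Fin (k + 1) → X, IsBdryTuple G B v → ω₂ v = φ v) :
    (∀ u : Fin (k + 2) → X, gd G ω₁ u = gd G ω₂ u) ∧
      ∀ v : Fin (k + 1) → X, Nop w B (gd G ω₁) v = Nop w B (gd G ω₂) v := by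
  classical
  set ω : (Fin (k + 1) → X) → ℝ := fun v => ω₁ v - ω₂ v with hωdef
  have hsk : ∀ (σ : Equiv.Perm (Fin (k + 1))) (v : Fin (k + 1) → X),
      ω (v ∘ ⇑σ) = ((Equiv.Perm.sign σ : ℤ) : ℝ) * ω v := by
    intro σ v
    simp only [hωdef, h₁.2 σ v, h₂.2 σ v]
    ring
  have hgdsub : ∀ u : Fin (k + 2) → X, gd G ω u = gd G ω₁ u - gd G ω₂ u := by
    intro u
    simp only [gd, hωdef]
    rw [← mul_sub, ← Finset.sum_sub_distrib]
    congr 1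
    apply Finset.sum_congr rfl
    intro j _
    ring
  have hcw : ∀ (v : Fin (k + 2) → X), cliqueInd G v * w.w v = w.w v := by
    intro v
    unfold cliqueInd
    split_ifs with h
    · ring
    · rw [w.eq_zero v h, mul_zero]
  have hcliquetail : ∀ (x : X) (u : Fin (k + 1) → X),
      IsTupleClique G (Fin.cons x u) → IsTupleClique G u := by
    intro x u h i j hij
    have := h i.succ j.succ (fun hh => hij (Fin.succ_injective _ hh))
    simpa using this
  have hvan : ∀ u : Fin (k + 1) → X, IsTupleClique G u → ∀ i, u i ∈ B → ω u = 0 := by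
    intro u hu i hi
    have hbt : IsBdryTuple G B (u ∘ ⇑i.cycleRange.symm) := by
      refine ⟨(isTupleClique_comp_s10 _ u).mpr hu, ?_, ?_⟩
      · show u (i.cycleRange.symm 0) ∈ B
        rw [Fin.cycleRange_symm_zero]; exact hi
      · intro m
        show u (i.cycleRange.symm m.succ) ∉ B
        rw [Fin.cycleRange_symm_succ]
        intro hmem
        exact hB.1 _ hi _ hmem (hu i _ (Fin.succAbove_ne i m).symm)
    have hz : ω (u ∘ ⇑i.cycleRange.symm) = 0 := by
      simp only [hωdef]
      rw [hbv₁ _ hbt, hbv₂ _ hbt, sub_self]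
    have hss := hsk i.cycleRange.symm u
    rw [hz] at hss
    have hsne : (((Equiv.Perm.sign i.cycleRange.symm : ℤ) : ℝ)) ≠ 0 :=
      Int.cast_ne_zero.mpr (Units.ne_zero _)
    exact (mul_eq_zero.mp hss.symm).resolve_left hsne
  have hharm : ∀ v : Fin (k + 1) → X, (∀ i, v i ∉ B) →
      ∑ x : X, gd G ω (Fin.cons x v) * w.w (Fin.cons x v) = 0 := by
    intro v hv
    by_cases hcl : IsTupleClique G v
    · have hwpos := w.pos v hcl
      have key : ∀ (α : (Fin (k + 1) → X) → ℝ),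
          gdelta w (gd G α) v = 0 →
            ∑ x : X, gd G α (Fin.cons x v) * w.w (Fin.cons x v) = 0 := by
        intro α hα
        unfold gdelta at hα
        rcases mul_eq_zero.mp hα with h | h
        · exact absurd h (inv_ne_zero hwpos.ne')
        · exact h
      have e1 := key ω₁ (hharm₁ v hv)
      have e2 := key ω₂ (hharm₂ v hv)
      calc ∑ x : X, gd G ω (Fin.cons x v) * w.w (Fin.cons x v)
          = ∑ x : X, (gd G ω₁ (Fin.cons x v) * w.w (Fin.cons x v)
            - gd G ω₂ (Fin.cons x v) * w.w (Fin.cons x v)) := by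
            apply Finset.sum_congr rfl; intro x _; rw [hgdsub]; ring
        _ = 0 := by rw [Finset.sum_sub_distrib, e1, e2, sub_zero]
    · apply Finset.sum_eq_zero
      intro x _
      rw [w.eq_zero _ (fun h => hcl (hcliquetail x v h)), mul_zero]
  have hS : ∑ v : Fin (k + 2) → X, gd G ω v * gd G ω v * w.w v = 0 := by
    have hDSw : ∀ v : Fin (k + 2) → X,
        gd G ω v * w.w v
          = (∑ j : Fin (k + 2), (-1 : ℝ) ^ (j : ℕ) * ω (v ∘ j.succAbove)) * w.w v := by
      intro v
      have h1 : gd G ω v * w.w v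
          = (∑ j : Fin (k + 2), (-1 : ℝ) ^ (j : ℕ) * ω (v ∘ j.succAbove))
            * (cliqueInd G v * w.w v) := by
        simp only [gd]; ring
      rw [h1, hcw]
    have e1 : ∑ v : Fin (k + 2) → X, gd G ω v * gd G ω v * w.w v
        = ∑ j : Fin (k + 2), ∑ v : Fin (k + 2) → X,
            gd G ω v * ((-1 : ℝ) ^ (j : ℕ) * ω (v ∘ j.succAbove)) * w.w v := by
      rw [Finset.sum_comm]
      apply Finset.sum_congr rfl
      intro v _
      calc gd G ω v * gd G ω v * w.w v
          = gd G ω v * (gd G ω v * w.w v) := by ring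
        _ = gd G ω v * ((∑ j : Fin (k + 2), (-1 : ℝ) ^ (j : ℕ) * ω (v ∘ j.succAbove)) * w.w v) := by
            rw [hDSw]
        _ = ∑ j : Fin (k + 2), gd G ω v * ((-1 : ℝ) ^ (j : ℕ) * ω (v ∘ j.succAbove)) * w.w v := by
            rw [Finset.sum_mul, Finset.mul_sum]
            apply Finset.sum_congr rfl
            intro j _
            ring
    have e2 : ∀ j : Fin (k + 2),
        ∑ v : Fin (k + 2) → X, gd G ω v * ((-1 : ℝ) ^ (j : ℕ) * ω (v ∘ j.succAbove)) * w.w v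
          = ∑ v : Fin (k + 2) → X, gd G ω v * ω (v ∘ Fin.succ) * w.w v := by
      intro j
      refine (Fintype.sum_equiv (Equiv.arrowCongr j.cycleRange.symm (Equiv.refl X))
        (fun v => gd G ω v * ω (v ∘ Fin.succ) * w.w v)
        (fun v => gd G ω v * ((-1 : ℝ) ^ (j : ℕ) * ω (v ∘ j.succAbove)) * w.w v) ?_).symm
      intro v
      show gd G ω v * ω (v ∘ Fin.succ) * w.w v
        = gd G ω (v ∘ ⇑j.cycleRange)
          * ((-1 : ℝ) ^ (j : ℕ) * ω ((v ∘ ⇑j.cycleRange) ∘ j.succAbove))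
          * w.w (v ∘ ⇑j.cycleRange)
      have h1 : gd G ω (v ∘ ⇑j.cycleRange) = ((-1 : ℝ) ^ (j : ℕ)) * gd G ω v := by
        rw [gd_comp_perm hsk]
        norm_num [Fin.sign_cycleRange]
      have h2 : (v ∘ ⇑j.cycleRange) ∘ j.succAbove = v ∘ Fin.succ := by
        funext m
        exact congrArg v (Fin.cycleRange_succAbove j m)
      have h3 : w.w (v ∘ ⇑j.cycleRange) = w.w v := w.symm j.cycleRange v
      rw [h1, h2, h3]
      have h4 : ((-1 : ℝ) ^ (j : ℕ)) * ((-1 : ℝ) ^ (j : ℕ)) = 1 := by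
        rw [← mul_pow]; norm_num
      calc gd G ω v * ω (v ∘ Fin.succ) * w.w v
          = (((-1 : ℝ) ^ (j : ℕ)) * ((-1 : ℝ) ^ (j : ℕ)))
            * (gd G ω v * ω (v ∘ Fin.succ) * w.w v) := by rw [h4, one_mul]
        _ = (-1 : ℝ) ^ (j : ℕ) * gd G ω v
            * ((-1 : ℝ) ^ (j : ℕ) * ω (v ∘ Fin.succ)) * w.w v := by ring
    have e3 : ∑ v : Fin (k + 2) → X, gd G ω v * ω (v ∘ Fin.succ) * w.w v = 0 := by
      have ec : ∑ v : Fin (k + 2) → X, gd G ω v * ω (v ∘ Fin.succ) * w.w v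
          = ∑ p : X × (Fin (k + 1) → X),
              gd G ω (Fin.cons p.1 p.2) * ω p.2 * w.w (Fin.cons p.1 p.2) := by
        refine (Fintype.sum_equiv (Fin.consEquiv fun _ : Fin (k + 2) => X)
          (fun p => gd G ω (Fin.cons p.1 p.2) * ω p.2 * w.w (Fin.cons p.1 p.2))
          (fun v => gd G ω v * ω (v ∘ Fin.succ) * w.w v) ?_).symm
        intro p
        show gd G ω (Fin.cons p.1 p.2) * ω p.2 * w.w (Fin.cons p.1 p.2)
          = gd G ω (Fin.cons p.1 p.2) * ω ((Fin.cons p.1 p.2 : Fin (k + 2) → X) ∘ Fin.succ)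
            * w.w (Fin.cons p.1 p.2)
        have h2 : (Fin.cons p.1 p.2 : Fin (k + 2) → X) ∘ Fin.succ = p.2 := by
          funext m; simp
        rw [h2]
      rw [ec, Fintype.sum_prod_type, Finset.sum_comm]
      apply Finset.sum_eq_zero
      intro u _
      by_cases hub : ∀ i, u i ∉ B
      · have hz := hharm u hub
        calc ∑ x : X, gd G ω (Fin.cons x u) * ω u * w.w (Fin.cons x u)
            = ω u * ∑ x : X, gd G ω (Fin.cons x u) * w.w (Fin.cons x u) := by
              rw [Finset.mul_sum]; apply Finset.sum_congr rfl; intro x _; ring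
          _ = 0 := by rw [hz, mul_zero]
      · push_neg at hub
        obtain ⟨i, hi⟩ := hub
        by_cases hcl : IsTupleClique G u
        · have hz := hvan u hcl i hi
          apply Finset.sum_eq_zero; intro x _; rw [hz]; ring
        · apply Finset.sum_eq_zero; intro x _
          rw [w.eq_zero _ (fun h => hcl (hcliquetail x u h)), mul_zero]
    rw [e1]
    apply Finset.sum_eq_zero
    intro j _
    rw [e2 j, e3]
  have hnn : ∀ v ∈ (Finset.univ : Finset (Fin (k + 2) → X)),
      0 ≤ gd G ω v * gd G ω v * w.w v := by
    intro v _
    apply mul_nonneg (mul_self_nonneg _)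
    by_cases h : IsTupleClique G v
    · exact (w.pos v h).le
    · exact le_of_eq (w.eq_zero v h).symm
  have hzero : ∀ u : Fin (k + 2) → X, gd G ω u = 0 := by
    intro u
    by_cases hcl : IsTupleClique G u
    · have hterm := (Finset.sum_eq_zero_iff_of_nonneg hnn).mp hS u (Finset.mem_univ u)
      have hwpos := w.pos u hcl
      have hsq : gd G ω u * gd G ω u = 0 := by
        rcases mul_eq_zero.mp hterm with h | h
        · exact h
        · exact absurd h hwpos.ne'
      exact mul_self_eq_zero.mp hsq
    · simp only [gd, cliqueInd, if_neg hcl, zero_mul]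
  have hpart1 : ∀ u : Fin (k + 2) → X, gd G ω₁ u = gd G ω₂ u := by
    intro u
    have hz := hzero u
    rw [hgdsub u] at hz
    linarith
  refine ⟨hpart1, ?_⟩
  intro v
  unfold Nop
  congr 1
  apply Finset.sum_congr rfl
  intro x _
  rw [hpart1 (Fin.cons x v)]


end GraphHodge
end
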